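/- arXiv:cs/0506098 — 9 statements merged into one kernel-verified Lean document; each statement's English description precedes it below -/
import Mathlib

section
/- Let (a_t)_{t≥0} be a sequence of nonnegative reals satisfying a_{t+1} ≤ n + 2·√n·√(a_t) for all t, where n ≥ 1. If a_{t'} > 18n for all t' < t, then a_t ≤ 9^{1 - 2^{-t}} · n^{1 - 2^{-t}} · a_0^{2^{-t}}. -/
theorem stmt_4 (n : ℝ) (hn : 1 ≤ n) (a : ℕ → ℝ)
    (hpos : ∀ t, 0 ≤ a t)
    (hrec : ∀ t, a (t + 1) ≤ n + 2 * Real.sqrt n * Real.sqrt (a t))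
    (t : ℕ) (hbig : ∀ t' < t, a t' > 18 * n) :
    a t ≤ (9 : ℝ) ^ (1 - (2 : ℝ) ^ (-(t : ℝ)))
          * n ^ (1 - (2 : ℝ) ^ (-(t : ℝ)))
          * (a 0) ^ ((2 : ℝ) ^ (-(t : ℝ))) := by
  induction t with
  | zero => simp
  | succ t ih =>
    have hn0 : (0:ℝ) < n := by linarith
    have hat : a t > 18 * n := hbig t (Nat.lt_succ_self t)
    have ha0 : (0:ℝ) < a 0 := by
      have := hbig 0 (Nat.succ_pos t); linarith
    have h1 := ih (fun t' ht' => hbig t' (ht'.trans (Nat.lt_succ_self t)))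
    set p : ℝ := (2:ℝ) ^ (-(t:ℝ)) with hp
    have hpe : (2:ℝ) ^ (-((t:ℝ)+1)) = p / 2 := by
      rw [show -((t:ℝ)+1) = (-(t:ℝ)) + (-1) by ring,
        Real.rpow_add two_pos, Real.rpow_neg_one]
      ring
    have hatn : n ≤ a t := by linarith
    have h2 : a (t+1) ≤ 3 * Real.sqrt n * Real.sqrt (a t) := by
      have hr := hrec t
      have hs : n ≤ Real.sqrt n * Real.sqrt (a t) := by
        calc n = Real.sqrt n * Real.sqrt n := (Real.mul_self_sqrt hn0.le).symm
        _ ≤ Real.sqrt n * Real.sqrt (a t) :=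
            mul_le_mul_of_nonneg_left (Real.sqrt_le_sqrt hatn) (Real.sqrt_nonneg n)
      linarith
    have hB : Real.sqrt ((9:ℝ)^(1-p)*n^(1-p)*(a 0)^p)
        = (9:ℝ)^((1-p)/2)*n^((1-p)/2)*(a 0)^(p/2) := by
      have hsr : ∀ x : ℝ, 0 ≤ x → ∀ y : ℝ, Real.sqrt (x ^ y) = x ^ (y/2) := by
        intro x hx y
        rw [Real.sqrt_eq_rpow, ← Real.rpow_mul hx]
        congr 1; ring
      rw [Real.sqrt_mul (by positivity), Real.sqrt_mul (by positivity),
        hsr 9 (by norm_num), hsr n hn0.le, hsr (a 0) ha0.le]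
    have h3 : Real.sqrt (a t) ≤ (9:ℝ)^((1-p)/2)*n^((1-p)/2)*(a 0)^(p/2) := by
      rw [← hB]; exact Real.sqrt_le_sqrt h1
    have h9 : (3:ℝ) = (9:ℝ) ^ ((1:ℝ)/2) := by
      rw [show (9:ℝ) = 3^(2:ℕ) by norm_num, ← Real.rpow_natCast 3 2,
        ← Real.rpow_mul (by norm_num)]
      norm_num
    have key : a (t+1) ≤ 3 * Real.sqrt n * ((9:ℝ)^((1-p)/2)*n^((1-p)/2)*(a 0)^(p/2)) := by
      calc a (t+1) ≤ 3 * Real.sqrt n * Real.sqrt (a t) := h2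
      _ ≤ 3 * Real.sqrt n * ((9:ℝ)^((1-p)/2)*n^((1-p)/2)*(a 0)^(p/2)) := by
          apply mul_le_mul_of_nonneg_left h3
          positivity
    have heq : 3 * Real.sqrt n * ((9:ℝ)^((1-p)/2)*n^((1-p)/2)*(a 0)^(p/2))
        = (9:ℝ)^(1-p/2)*n^(1-p/2)*(a 0)^(p/2) := by
      rw [Real.sqrt_eq_rpow, h9]
      rw [show (1 - p/2 : ℝ) = (1:ℝ)/2 + (1-p)/2 by ring,
        Real.rpow_add (by norm_num : (0:ℝ) < 9), Real.rpow_add hn0]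
      ring
    push_cast
    rw [hpe]
    linarith [key, heq.le]
end

section
/- Let (a_t)_{t≥0} be nonnegative reals with a_{t+1} ≤ n + 2·√n·√(a_t) for all t, n ≥ 1, and a_0 ≥ 2. Then there exists τ ≤ ⌈log₂ log₂ a_0⌉ such that a_τ ≤ 18n. -/
theorem stmt_5 (n : ℝ) (hn : 1 ≤ n) (a : ℕ → ℝ)
    (hpos : ∀ t, 0 ≤ a t)
    (hrec : ∀ t, a (t + 1) ≤ n + 2 * Real.sqrt n * Real.sqrt (a t))
    (h0 : 2 ≤ a 0) :
    ∃ τ : ℕ, τ ≤ ⌈Real.logb 2 (Real.logb 2 (a 0))⌉₊ ∧ a τ ≤ 18 * n := by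
  have hn0 : (0:ℝ) ≤ n := by linarith
  have ha0 : (1:ℝ) ≤ a 0 := by linarith
  have ha00 : (0:ℝ) ≤ a 0 := by linarith
  have key : ∀ t : ℕ, a t ≤ 9 * n * a 0 ^ (((2:ℝ)^t)⁻¹) := by
    intro t
    induction t with
    | zero =>
      simp only [pow_zero, inv_one, Real.rpow_one]
      nlinarith [hpos 0]
    | succ t ih =>
      have hexp : (0:ℝ) ≤ ((2:ℝ)^(t+1))⁻¹ := by positivity
      have h1 : (1:ℝ) ≤ a 0 ^ (((2:ℝ)^(t+1))⁻¹) :=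
        Real.one_le_rpow ha0 hexp
      have hsqE : Real.sqrt (a 0 ^ (((2:ℝ)^t)⁻¹)) = a 0 ^ (((2:ℝ)^(t+1))⁻¹) := by
        rw [Real.sqrt_eq_rpow, ← Real.rpow_mul ha00]
        congr 1
        rw [pow_succ, mul_inv]
        norm_num
      have hs : Real.sqrt (a t) ≤ 3 * Real.sqrt n * a 0 ^ (((2:ℝ)^(t+1))⁻¹) := by
        calc Real.sqrt (a t) ≤ Real.sqrt (9 * n * a 0 ^ (((2:ℝ)^t)⁻¹)) :=
              Real.sqrt_le_sqrt ih
        _ = Real.sqrt (9 * n) * Real.sqrt (a 0 ^ (((2:ℝ)^t)⁻¹)) :=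
              Real.sqrt_mul (by positivity) _
        _ = 3 * Real.sqrt n * a 0 ^ (((2:ℝ)^(t+1))⁻¹) := by
              rw [show (9:ℝ) * n = 3^2 * n by ring, Real.sqrt_mul (by positivity),
                Real.sqrt_sq (by norm_num), hsqE]
      have hmul : Real.sqrt n * Real.sqrt n = n := Real.mul_self_sqrt hn0
      have hsn : (0:ℝ) ≤ Real.sqrt n := Real.sqrt_nonneg n
      have h2 := hrec t
      nlinarith [mul_nonneg hsn (sub_nonneg.mpr hs)]
  -- now take τ
  set x := Real.logb 2 (Real.logb 2 (a 0)) with hx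
  refine ⟨⌈x⌉₊, le_rfl, ?_⟩
  set τ := ⌈x⌉₊ with hτdef
  have hlog1 : 0 < Real.logb 2 (a 0) := Real.logb_pos one_lt_two (by linarith)
  have hceil : x ≤ (τ:ℝ) := Nat.le_ceil x
  have hlog2 : Real.logb 2 (a 0) ≤ (2:ℝ)^τ := by
    have := Real.rpow_le_rpow_of_exponent_le one_le_two hceil
    rw [hx, Real.rpow_logb (by norm_num) (by norm_num) hlog1] at this
    calc Real.logb 2 (a 0) ≤ (2:ℝ) ^ (τ:ℝ) := this
    _ = (2:ℝ)^τ := Real.rpow_natCast 2 τ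
  have ha0le : a 0 ≤ (2:ℝ) ^ ((2:ℝ)^τ) := by
    have := Real.rpow_le_rpow_of_exponent_le one_le_two hlog2
    rwa [Real.rpow_logb (by norm_num) (by norm_num) (by linarith : (0:ℝ) < a 0)] at this
  have hE : a 0 ^ (((2:ℝ)^τ)⁻¹) ≤ 2 := by
    have hne : ((2:ℝ)^τ) ≠ 0 := by positivity
    calc a 0 ^ (((2:ℝ)^τ)⁻¹)
        ≤ ((2:ℝ) ^ ((2:ℝ)^τ)) ^ (((2:ℝ)^τ)⁻¹) :=
          Real.rpow_le_rpow ha00 ha0le (by positivity)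
      _ = (2:ℝ) ^ (((2:ℝ)^τ) * ((2:ℝ)^τ)⁻¹) := (Real.rpow_mul (by norm_num) _ _).symm
      _ = 2 := by rw [mul_inv_cancel₀ hne, Real.rpow_one]
  calc a τ ≤ 9 * n * a 0 ^ (((2:ℝ)^τ)⁻¹) := key τ
  _ ≤ 9 * n * 2 := by nlinarith
  _ = 18 * n := by ring
end

section
/- Let x = (x_1,...,x_n) be a vector of nonnegative integers with mean x̄ and Φ(x) = Σ_{i=1}^n (x_i - x̄)². Suppose |x_i - x̄| < 5/2 for all i. Define s_i(x) = |{j : x_j = x_i - 1}|, l_i(x) = |{j : x_j = x_i + 1}|, u₁(x) = Σ_i Σ_{j:|x_i-x_j|>1} |x_i - x_j|, u₂(x) = Σ_i (s_i(x) - l_i(x))², and u(x) = u₁(x)/n + u₂(x)/n². Then u(x) ≤ Φ(x). -/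
open Finset

private lemma key_poly (a b c d e : ℤ) (ha : 0 ≤ a) (hb : 0 ≤ b) (hc : 0 ≤ c)
    (hd : 0 ≤ d) (he : 0 ≤ e) :
    2 * ((a+b+c+d+e) * (4*a*c + 6*a*d + 8*a*e + 4*b*d + 6*b*e + 4*c*e)
       + (a*b^2 + b*(a-c)^2 + c*(b-d)^2 + d*(c-e)^2 + e*d^2))
    ≤ (a+b+c+d+e) * (2*a*b + 8*a*c + 18*a*d + 32*a*e + 2*b*c + 8*b*d + 18*b*e
       + 2*c*d + 8*c*e + 2*d*e) := by
  have cert : (a+b+c+d+e) * (2*a*b + 8*a*c + 18*a*d + 32*a*e + 2*b*c + 8*b*d + 18*b*e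
       + 2*c*d + 8*c*e + 2*d*e)
      - 2 * ((a+b+c+d+e) * (4*a*c + 6*a*d + 8*a*e + 4*b*d + 6*b*e + 4*c*e)
       + (a*b^2 + b*(a-c)^2 + c*(b-d)^2 + d*(c-e)^2 + e*d^2))
      = 6*a*a*d + 16*a*a*e + 8*a*b*c + 8*a*b*d + 24*a*b*e + 8*a*c*d + 16*a*c*e
        + 6*a*d*d + 24*a*d*e + 16*a*e*e + 6*b*b*e + 8*b*c*d + 8*b*c*e + 8*b*d*e
        + 6*b*e*e + 8*c*d*e := by ring
  linarith [cert, mul_nonneg (mul_nonneg ha ha) hd, mul_nonneg (mul_nonneg ha ha) he, mul_nonneg (mul_nonneg ha hb) hc, mul_nonneg (mul_nonneg ha hb) hd, mul_nonneg (mul_nonneg ha hb) he, mul_nonneg (mul_nonneg ha hc) hd, mul_nonneg (mul_nonneg ha hc) he, mul_nonneg (mul_nonneg ha hd) hd, mul_nonneg (mul_nonneg ha hd) he, mul_nonneg (mul_nonneg ha he) he, mul_nonneg (mul_nonneg hb hb) he, mul_nonneg (mul_nonneg hb hc) hd, mul_nonneg (mul_nonneg hb hc) he, mul_nonneg (mul_nonneg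 hb hd) he, mul_nonneg (mul_nonneg hb he) he, mul_nonneg (mul_nonneg hc hd) he]

private lemma fiber_sum {n : ℕ} (x : Fin n → ℕ) (K : ℤ)
    (hlo : ∀ i, K ≤ (x i : ℤ)) (hhi : ∀ i, (x i : ℤ) ≤ K + 4) (F : ℤ → ℤ) :
    ∑ i, F ((x i : ℤ)) = ∑ t ∈ Finset.range 5,
      ((Finset.univ.filter (fun j : Fin n => (x j : ℤ) = K + t)).card : ℤ) * F (K + (t:ℤ)) := by
  rw [← Finset.sum_fiberwise_of_maps_to (g := fun i : Fin n => ((x i : ℤ) - K).toNat)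
      (t := Finset.range 5) (fun i _ => by have := hlo i; have := hhi i; simp; omega)]
  refine Finset.sum_congr rfl fun t ht => ?_
  simp only [Finset.mem_range] at ht
  have hfil : (Finset.univ.filter (fun i : Fin n => ((x i : ℤ) - K).toNat = t))
      = (Finset.univ.filter (fun j : Fin n => (x j : ℤ) = K + (t:ℤ))) := by
    apply Finset.filter_congr
    intro i _
    have := hlo i
    constructor <;> intro h <;> omega
  rw [hfil, Finset.sum_congr rfl (fun i hi => ?_), Finset.sum_const, nsmul_eq_mul]
  simp only [Finset.mem_filter] at hi
  rw [hi.2]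

private lemma fiber_sum2 {n : ℕ} (x : Fin n → ℕ) (K : ℤ)
    (hlo : ∀ i, K ≤ (x i : ℤ)) (hhi : ∀ i, (x i : ℤ) ≤ K + 4) (F : ℤ → ℤ → ℤ) :
    ∑ i, ∑ j, F ((x i : ℤ)) ((x j : ℤ)) = ∑ t ∈ Finset.range 5, ∑ u ∈ Finset.range 5,
      ((Finset.univ.filter (fun j : Fin n => (x j : ℤ) = K + t)).card : ℤ) *
      ((Finset.univ.filter (fun j : Fin n => (x j : ℤ) = K + u)).card : ℤ) *
      F (K + (t:ℤ)) (K + (u:ℤ)) := by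
  rw [fiber_sum x K hlo hhi (fun v => ∑ j, F v ((x j : ℤ)))]
  refine Finset.sum_congr rfl fun t ht => ?_
  rw [fiber_sum x K hlo hhi (fun v => F (K + (t:ℤ)) v), Finset.mul_sum]
  exact Finset.sum_congr rfl fun u hu => by ring

set_option maxHeartbeats 1000000 in
private lemma key_counts {n : ℕ} (x : Fin n → ℕ) (K : ℤ)
    (hlo : ∀ i, K ≤ (x i : ℤ)) (hhi : ∀ i, (x i : ℤ) ≤ K + 4) :
    2 * ((n:ℤ) * (∑ i, ∑ j, if 1 < |(x i : ℤ) - (x j : ℤ)| then |(x i : ℤ) - (x j : ℤ)| else 0)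
        + ∑ i, (((Finset.univ.filter (fun j : Fin n => (x j : ℤ) = (x i : ℤ) - 1)).card : ℤ)
              - ((Finset.univ.filter (fun j : Fin n => (x j : ℤ) = (x i : ℤ) + 1)).card : ℤ)) ^ 2)
      ≤ (n:ℤ) * ∑ i, ∑ j, ((x i : ℤ) - (x j : ℤ)) ^ 2 := by
  have hT := fiber_sum2 x K hlo hhi (fun v w => (v - w) ^ 2)
  have hU1 := fiber_sum2 x K hlo hhi (fun v w => if 1 < |v - w| then |v - w| else 0)
  have hU2 := fiber_sum x K hlo hhi (fun v =>
    (((Finset.univ.filter (fun j : Fin n => (x j : ℤ) = v - 1)).card : ℤ)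
      - ((Finset.univ.filter (fun j : Fin n => (x j : ℤ) = v + 1)).card : ℤ)) ^ 2)
  have hn2 := fiber_sum x K hlo hhi (fun _ => (1:ℤ))
  simp only [Finset.sum_const, Finset.card_univ, Fintype.card_fin, nsmul_eq_mul, mul_one] at hn2
  have hz1 : ((Finset.univ.filter (fun j : Fin n => (x j : ℤ) = K - 1)).card : ℤ) = 0 := by
    norm_num [Finset.filter_eq_empty_iff]
    intro i
    have := hlo i; omega
  have hz2 : ((Finset.univ.filter (fun j : Fin n => (x j : ℤ) = K + 5)).card : ℤ) = 0 := by
    norm_num [Finset.filter_eq_empty_iff]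
    intro i
    have := hhi i; omega
  rw [hT, hU1, hU2, hn2]
  simp only [Finset.sum_range_succ, Finset.sum_range_zero]
  norm_num
  ring_nf
  ring_nf at hz1 hz2
  rw [hz1, hz2]
  set a : ℤ := ((Finset.univ.filter (fun j : Fin n => (x j : ℤ) = K)).card : ℤ) with ha
  set b : ℤ := ((Finset.univ.filter (fun j : Fin n => (x j : ℤ) = 1 + K)).card : ℤ) with hb
  set c : ℤ := ((Finset.univ.filter (fun j : Fin n => (x j : ℤ) = 2 + K)).card : ℤ) with hc
  set d : ℤ := ((Finset.univ.filter (fun j : Fin n => (x j : ℤ) = 3 + K)).card : ℤ) with hd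
  set e : ℤ := ((Finset.univ.filter (fun j : Fin n => (x j : ℤ) = 4 + K)).card : ℤ) with he
  have ha0 : 0 ≤ a := by rw [ha]; positivity
  have hb0 : 0 ≤ b := by rw [hb]; positivity
  have hc0 : 0 ≤ c := by rw [hc]; positivity
  have hd0 : 0 ≤ d := by rw [hd]; positivity
  have he0 : 0 ≤ e := by rw [he]; positivity
  linarith [key_poly a b c d e ha0 hb0 hc0 hd0 he0]

theorem stmt_7 (n : ℕ) (hn : 0 < n) (x : Fin n → ℕ)
    (hclose : ∀ i, |(x i : ℝ) - (∑ k, (x k : ℝ)) / n| < 5 / 2) :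
    let xbar : ℝ := (∑ k, (x k : ℝ)) / n
    let Φ : ℝ := ∑ i, ((x i : ℝ) - xbar) ^ 2
    let s : Fin n → ℕ := fun i => (Finset.univ.filter (fun j : Fin n => (x j : ℤ) = (x i : ℤ) - 1)).card
    let l : Fin n → ℕ := fun i => (Finset.univ.filter (fun j : Fin n => (x j : ℤ) = (x i : ℤ) + 1)).card
    let u₁ : ℝ := ∑ i, ∑ j ∈ Finset.univ.filter (fun j : Fin n => 1 < |(x i : ℤ) - (x j : ℤ)|),
        |(x i : ℝ) - (x j : ℝ)|
    let u₂ : ℝ := ∑ i, ((s i : ℝ) - (l i : ℝ)) ^ 2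
    u₁ / n + u₂ / n ^ 2 ≤ Φ := by
  intro xbar Φ s l u₁ u₂
  have hn' : (0:ℝ) < n := by exact_mod_cast hn
  set K : ℤ := ⌊(∑ k, (x k : ℝ)) / n - 5/2⌋ + 1 with hK
  have hlo : ∀ i, K ≤ (x i : ℤ) := by
    intro i
    have h := abs_lt.mp (hclose i)
    have h2 : (∑ k, (x k : ℝ)) / n - 5/2 < ((x i : ℤ) : ℝ) := by push_cast; linarith [h.1]
    have := Int.floor_lt.mpr h2
    omega
  have hhi : ∀ i, (x i : ℤ) ≤ K + 4 := by
    intro i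
    have h := abs_lt.mp (hclose i)
    have hfl := Int.lt_floor_add_one ((∑ k, (x k : ℝ)) / n - 5/2)
    have h2 : ((x i : ℤ) : ℝ) < ((K + 5 : ℤ) : ℝ) := by
      rw [hK]; push_cast; linarith [h.2]
    have : (x i : ℤ) < K + 5 := by exact_mod_cast h2
    omega
  have keyZ := key_counts x K hlo hhi
  -- cast u₁
  have hu₁ : u₁ = ((∑ i, ∑ j, if 1 < |(x i : ℤ) - (x j : ℤ)| then |(x i : ℤ) - (x j : ℤ)| else 0 : ℤ) : ℝ) := by
    show (∑ i, ∑ j ∈ Finset.univ.filter (fun j : Fin n => 1 < |(x i : ℤ) - (x j : ℤ)|),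
        |(x i : ℝ) - (x j : ℝ)|) = _
    rw [show (∑ i, ∑ j, if 1 < |(x i : ℤ) - (x j : ℤ)| then |(x i : ℤ) - (x j : ℤ)| else 0 : ℤ)
        = ∑ i, ∑ j ∈ Finset.univ.filter (fun j : Fin n => 1 < |(x i : ℤ) - (x j : ℤ)|),
            |(x i : ℤ) - (x j : ℤ)| from
      Finset.sum_congr rfl fun i _ => (Finset.sum_filter _ _).symm]
    push_cast
    rfl
  have hu₂ : u₂ = ((∑ i, (((Finset.univ.filter (fun j : Fin n => (x j : ℤ) = (x i : ℤ) - 1)).card : ℤ)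
      - ((Finset.univ.filter (fun j : Fin n => (x j : ℤ) = (x i : ℤ) + 1)).card : ℤ)) ^ 2 : ℤ) : ℝ) := by
    show (∑ i, ((s i : ℝ) - (l i : ℝ)) ^ 2) = _
    push_cast
    rfl
  have hTr : ((∑ i, ∑ j, ((x i : ℤ) - (x j : ℤ)) ^ 2 : ℤ) : ℝ)
      = ∑ i, ∑ j, ((x i : ℝ) - (x j : ℝ)) ^ 2 := by
    push_cast
    rfl
  -- the variance identity
  have e1 : ∀ i : Fin n, ∑ j, ((x i : ℝ) - (x j : ℝ)) ^ 2
      = (n:ℝ) * (x i:ℝ)^2 - (2 * (x i:ℝ)) * (∑ k, (x k:ℝ)) + ∑ k, (x k:ℝ)^2 := by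
    intro i
    have h : ∀ j : Fin n, ((x i : ℝ) - (x j : ℝ))^2
        = (x i:ℝ)^2 - (2*(x i:ℝ))*(x j:ℝ) + (x j:ℝ)^2 := fun j => by ring
    rw [Finset.sum_congr rfl fun j _ => h j, Finset.sum_add_distrib, Finset.sum_sub_distrib,
      ← Finset.mul_sum, Finset.sum_const, Finset.card_univ, Fintype.card_fin, nsmul_eq_mul]
  have e2 : ∑ i, ∑ j, ((x i:ℝ) - (x j:ℝ))^2
      = 2*(n:ℝ)*(∑ k, (x k:ℝ)^2) - 2*(∑ k, (x k:ℝ))^2 := by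
    rw [Finset.sum_congr rfl fun i _ => e1 i, Finset.sum_add_distrib, Finset.sum_sub_distrib,
      ← Finset.mul_sum, ← Finset.sum_mul, ← Finset.mul_sum, Finset.sum_const,
      Finset.card_univ, Fintype.card_fin, nsmul_eq_mul]
    ring
  have e3 : Φ = (∑ k, (x k:ℝ)^2) - (2 * xbar) * (∑ k, (x k:ℝ)) + (n:ℝ) * xbar^2 := by
    show (∑ i, ((x i : ℝ) - xbar) ^ 2) = _
    have h : ∀ i : Fin n, ((x i : ℝ) - xbar)^2
        = (x i:ℝ)^2 - (2*xbar)*(x i:ℝ) + xbar^2 := fun i => by ring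
    rw [Finset.sum_congr rfl fun i _ => h i, Finset.sum_add_distrib, Finset.sum_sub_distrib,
      ← Finset.mul_sum, Finset.sum_const, Finset.card_univ, Fintype.card_fin, nsmul_eq_mul]
  have hΦ2 : 2 * (n:ℝ)^2 * Φ = (n:ℝ) * ∑ i, ∑ j, ((x i : ℝ) - (x j : ℝ)) ^ 2 := by
    rw [e2, e3]
    show 2*(n:ℝ)^2 * ((∑ k, (x k:ℝ)^2) - (2 * ((∑ k, (x k : ℝ)) / n)) * (∑ k, (x k:ℝ))
      + (n:ℝ) * ((∑ k, (x k : ℝ)) / n)^2) = _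
    field_simp
    ring
  -- finish
  rw [hu₁, hu₂, div_add_div _ _ (by positivity) (by positivity), div_le_iff₀ (by positivity)]
  have keyR : 2 * ((n:ℝ) * ((∑ i, ∑ j, if 1 < |(x i : ℤ) - (x j : ℤ)| then |(x i : ℤ) - (x j : ℤ)| else 0 : ℤ) : ℝ)
      + ((∑ i, (((Finset.univ.filter (fun j : Fin n => (x j : ℤ) = (x i : ℤ) - 1)).card : ℤ)
        - ((Finset.univ.filter (fun j : Fin n => (x j : ℤ) = (x i : ℤ) + 1)).card : ℤ)) ^ 2 : ℤ) : ℝ))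
      ≤ (n:ℝ) * ((∑ i, ∑ j, ((x i : ℤ) - (x j : ℤ)) ^ 2 : ℤ) : ℝ) := by
    exact_mod_cast keyZ
  rw [hTr] at keyR
  have A := mul_le_mul_of_nonneg_left keyR hn'.le
  have B : (n:ℝ) * (2 * (n:ℝ)^2 * Φ) = (n:ℝ) * ((n:ℝ) * ∑ i, ∑ j, ((x i : ℝ) - (x j : ℝ)) ^ 2) := by
    rw [hΦ2]
  nlinarith [A, B]
end

section
/- Let x = (x_1,...,x_n) be nonnegative integers (n ≥ 2) with mean x̄, satisfying |x_n - x̄| ≥ 5/2 and |x_i - x̄| ≤ |x_n - x̄| for all i. Let w = (x_1,...,x_{n-1}) with mean w̄ and k = |x_n - x̄|. Then Σ_{i=1}^n (x_i - x̄)² - Σ_{i=1}^{n-1}(x_i - w̄)² ≥ k². -/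
open Finset

lemma mean_min (n : ℕ) (hn : 1 ≤ n) (w : Fin n → ℝ) (z : ℝ) :
    (∑ i, (w i - (∑ i, w i) / n) ^ 2) ≤ ∑ i, (w i - z) ^ 2 := by
  set S := ∑ i, w i with hS
  have hn' : (1 : ℝ) ≤ n := by exact_mod_cast hn
  have hnpos : (0 : ℝ) < n := by linarith
  have key : ∀ z : ℝ, (∑ i, (w i - z) ^ 2) =
      (∑ i, (w i) ^ 2) - 2 * z * S + n * z ^ 2 := by
    intro z
    have : ∀ i : Fin n, (w i - z) ^ 2 = (w i) ^ 2 - 2 * z * (w i) + z ^ 2 := by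
      intro i; ring
    rw [Finset.sum_congr rfl (fun i _ => this i)]
    rw [Finset.sum_add_distrib, Finset.sum_sub_distrib, ← Finset.mul_sum, ← hS,
      Finset.sum_const, Finset.card_univ, Fintype.card_fin, nsmul_eq_mul]
  rw [key, key]
  have e : ∀ c : ℝ, ((∑ i, (w i) ^ 2) - 2 * c * S + n * c ^ 2) -
      ((∑ i, (w i) ^ 2) - 2 * (S / n) * S + n * (S / n) ^ 2) = n * (c - S / n) ^ 2 := by
    intro c
    field_simp
    ring
  nlinarith [e z, mul_nonneg (le_of_lt hnpos) (sq_nonneg (z - S / n))]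

theorem stmt_8 (n : ℕ) (hn : 1 ≤ n) (x : Fin (n + 1) → ℕ) :
    let xbar : ℝ := (∑ i, (x i : ℝ)) / (n + 1)
    let w : Fin n → ℕ := fun i => x i.castSucc
    let wbar : ℝ := (∑ i, (w i : ℝ)) / n
    let k : ℝ := |(x (Fin.last n) : ℝ) - xbar|
    (5 / 2 ≤ k) → (∀ i, |(x i : ℝ) - xbar| ≤ k) →
    (∑ i, ((x i : ℝ) - xbar) ^ 2) - (∑ i, ((w i : ℝ) - wbar) ^ 2) ≥ k ^ 2 := by
  intro xbar w wbar k hk hall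
  have hsplit : (∑ i, ((x i : ℝ) - xbar) ^ 2) =
      (∑ i : Fin n, ((w i : ℝ) - xbar) ^ 2) + ((x (Fin.last n) : ℝ) - xbar) ^ 2 := by
    rw [Fin.sum_univ_castSucc]
  have hmin : (∑ i, ((w i : ℝ) - wbar) ^ 2) ≤ ∑ i : Fin n, ((w i : ℝ) - xbar) ^ 2 :=
    mean_min n hn (fun i => (w i : ℝ)) xbar
  have hk2 : k ^ 2 = ((x (Fin.last n) : ℝ) - xbar) ^ 2 := sq_abs _
  linarith [hsplit, hmin, hk2.ge]
end

section
/- For any vector x = (x_1,...,x_n) of nonnegative integers, define Φ(x) = Σ_i (x_i - x̄)², s_i(x) = |{j : x_j = x_i - 1}|, l_i(x) = |{j : x_j = x_i + 1}|, u₁(x) = Σ_i Σ_{j:|x_i-x_j|>1} |x_i - x_j|, u₂(x) = Σ_i (s_i(x) - l_i(x))², and u(x) = u₁(x)/n + u₂(x)/n². Then Φ(x) - u(x) ≥ 0. -/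
/-!
Twice `n Φ` is `∑ i, ∑ j, (x i - x j) ^ 2`. A pair at distance `d ≥ 2` contributes `d ^ 2 ≥ 2 d`
and a pair at distance `1` contributes `1`, so `2 n Φ ≥ 2 u₁ + ∑ i, (s i + l i)`.
For `u₂`, double counting gives `∑ s i = ∑ l i` and `∑ s i ^ 2 = ∑ e i * l i` with
`e i = #{j | x j = x i}`; as `e i + l i ≤ n`, this yields
`∑ (s i - l i) ^ 2 ≤ ∑ s i ^ 2 + ∑ l i ^ 2 ≤ n ∑ l i = (n / 2) ∑ (s i + l i)`.
Hence `2 n ^ 2 Φ ≥ 2 n u₁ + 2 u₂`.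
-/

open Finset

section

variable {ι : Type*} [Fintype ι]

theorem two_mul_card_mul_sum_sq_sub_mean (b : ι → ℝ) :
    2 * Fintype.card ι * ∑ i, (b i - (∑ k, b k) / Fintype.card ι) ^ 2
      = ∑ i, ∑ j, (b i - b j) ^ 2 := by
  rcases isEmpty_or_nonempty ι with _ | _
  · simp
  have hcard : (Fintype.card ι : ℝ) ≠ 0 := by positivity
  simp only [sub_sq, sum_add_distrib, sum_sub_distrib, ← mul_sum, ← sum_mul, mul_assoc,
    sum_const, card_univ, nsmul_eq_mul]
  field_simp
  ring

variable (a : ι → ℤ)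

def numBelow (i : ι) : ℕ := #{j | a j = a i - 1}

def numAbove (i : ι) : ℕ := #{j | a j = a i + 1}

theorem sum_numBelow_eq_sum_numAbove : ∑ i, numBelow a i = ∑ i, numAbove a i := by
  simp only [numBelow, numAbove, card_filter]
  rw [sum_comm]
  exact sum_congr rfl fun i _ => sum_congr rfl fun j _ => if_congr (by omega) rfl rfl

/-- Both sides count the triples `(i, j, k)` with `a j = a k = a i - 1`: the left side groups them
by `i`, the right side by `j`. -/
theorem sum_numBelow_sq : ∑ i, numBelow a i ^ 2 = ∑ i, #{j | a j = a i} * numAbove a i := by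
  simp only [numBelow, numAbove, card_filter, sq, sum_mul_sum, ite_zero_mul_ite_zero, mul_one]
  rw [sum_comm]
  refine sum_congr rfl fun j _ => ?_
  rw [sum_comm]
  exact sum_congr rfl fun k _ => sum_congr rfl fun i _ => if_congr (by omega) rfl rfl

theorem card_filter_eq_add_numAbove_le (i : ι) : #{j | a j = a i} + numAbove a i ≤ Fintype.card ι := by
  classical
  rw [numAbove, ← card_union_of_disjoint (disjoint_filter.2 fun j _ h => by omega),
    ← filter_or]
  exact card_filter_le _ _

theorem two_mul_sum_sq_numBelow_sub_numAbove_le :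
    2 * ∑ i, ((numBelow a i : ℤ) - numAbove a i) ^ 2
      ≤ Fintype.card ι * ∑ i, ((numBelow a i : ℤ) + numAbove a i) := by
  have hsum : ∑ i, (numBelow a i : ℤ) = ∑ i, (numAbove a i : ℤ) := by
    exact_mod_cast sum_numBelow_eq_sum_numAbove a
  have hsq : ∑ i, (numBelow a i : ℤ) ^ 2 = ∑ i, (#{j | a j = a i} : ℤ) * numAbove a i := by
    exact_mod_cast sum_numBelow_sq a
  have hcross : 0 ≤ ∑ i, (numBelow a i : ℤ) * numAbove a i := by positivity
  have hbound : ∑ i, (numAbove a i : ℤ) * (#{j | a j = a i} + numAbove a i)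
      ≤ ∑ i, (numAbove a i : ℤ) * Fintype.card ι :=
    sum_le_sum fun i _ => mul_le_mul_of_nonneg_left
      (by exact_mod_cast card_filter_eq_add_numAbove_le a i) (by positivity)
  calc 2 * ∑ i, ((numBelow a i : ℤ) - numAbove a i) ^ 2
      = 2 * (∑ i, (numBelow a i : ℤ) ^ 2 + ∑ i, (numAbove a i : ℤ) ^ 2
          - 2 * ∑ i, (numBelow a i : ℤ) * numAbove a i) := by
        simp only [sub_sq, sum_add_distrib, sum_sub_distrib, mul_sum, mul_assoc]
        ring
    _ ≤ 2 * ∑ i, (numAbove a i : ℤ) * (#{j | a j = a i} + numAbove a i) := by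
        have hexpand : ∑ i, (numAbove a i : ℤ) * (#{j | a j = a i} + numAbove a i)
            = ∑ i, (#{j | a j = a i} : ℤ) * numAbove a i + ∑ i, (numAbove a i : ℤ) ^ 2 := by
          rw [← sum_add_distrib]
          exact sum_congr rfl fun i _ => by ring
        linarith
    _ ≤ 2 * ∑ i, (numAbove a i : ℤ) * Fintype.card ι := by linarith
    _ = Fintype.card ι * ∑ i, ((numBelow a i : ℤ) + numAbove a i) := by
        rw [sum_add_distrib, hsum, ← sum_mul]
        ring

theorem numBelow_add_numAbove (i : ι) : numBelow a i + numAbove a i = #{j | |a i - a j| = 1} := by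
  classical
  rw [numBelow, numAbove, ← card_union_of_disjoint (disjoint_filter.2 fun j _ h => by omega),
    ← filter_or]
  congr 1
  exact filter_congr fun j _ => by rw [abs_eq zero_le_one]; omega

theorem far_add_adjacent_le_sq (d : ℤ) :
    (if 1 < |d| then 2 * |d| else 0) + (if |d| = 1 then 1 else 0) ≤ d ^ 2 := by
  split_ifs <;> nlinarith [sq_abs d, abs_nonneg d]

theorem two_mul_sum_far_add_sum_adjacent_le :
    2 * ∑ i, ∑ j ∈ {j | 1 < |a i - a j|}, |a i - a j|
        + ∑ i, ((numBelow a i : ℤ) + numAbove a i)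
      ≤ ∑ i, ∑ j, (a i - a j) ^ 2 := by
  simp only [← Nat.cast_add, numBelow_add_numAbove, natCast_card_filter, sum_filter, mul_sum,
    mul_ite, mul_zero, ← sum_add_distrib]
  exact sum_le_sum fun i _ => sum_le_sum fun j _ => far_add_adjacent_le_sq _

end

theorem stmt_9 (n : ℕ) (x : Fin n → ℕ) :
    let xbar : ℝ := (∑ k, (x k : ℝ)) / n
    let Φ : ℝ := ∑ i, ((x i : ℝ) - xbar) ^ 2
    let s : Fin n → ℕ := fun i => (Finset.univ.filter (fun j : Fin n => (x j : ℤ) = (x i : ℤ) - 1)).card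
    let l : Fin n → ℕ := fun i => (Finset.univ.filter (fun j : Fin n => (x j : ℤ) = (x i : ℤ) + 1)).card
    let u₁ : ℝ := ∑ i, ∑ j ∈ Finset.univ.filter (fun j : Fin n => 1 < |(x i : ℤ) - (x j : ℤ)|),
        |(x i : ℝ) - (x j : ℝ)|
    let u₂ : ℝ := ∑ i, ((s i : ℝ) - (l i : ℝ)) ^ 2
    Φ - (u₁ / n + u₂ / n ^ 2) ≥ 0 := by
  intro xbar Φ s l u₁ u₂
  rcases Nat.eq_zero_or_pos n with rfl | hn
  · simp [Φ, u₁, u₂]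
  have hΦ : 2 * n * Φ = ∑ i, ∑ j, ((x i : ℝ) - x j) ^ 2 := by
    simpa using two_mul_card_mul_sum_sq_sub_mean fun k => (x k : ℝ)
  have hfar : 2 * u₁ + ∑ i, ((s i : ℝ) + l i) ≤ ∑ i, ∑ j, ((x i : ℝ) - x j) ^ 2 := by
    have h := (Int.cast_le (R := ℝ)).2 <| two_mul_sum_far_add_sum_adjacent_le fun k => (x k : ℤ)
    push_cast at h
    exact h
  have hadj : 2 * u₂ ≤ n * ∑ i, ((s i : ℝ) + l i) := by
    have h := (Int.cast_le (R := ℝ)).2 <|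
      two_mul_sum_sq_numBelow_sub_numAbove_le fun k => (x k : ℤ)
    push_cast [Fintype.card_fin] at h
    exact h
  have hn' : (0 : ℝ) < n := by exact_mod_cast hn
  rw [ge_iff_le, sub_nonneg, div_add_div _ _ hn'.ne' (by positivity), div_le_iff₀ (by positivity)]
  nlinarith
end

section
/- Let m, n be positive integers and r = m mod n. Among all vectors x = (x_1,...,x_n) of nonnegative integers summing to m, the potential Φ(x) = Σ_i (x_i - m/n)² satisfies Φ(x) ≥ r(1 - r/n), with equality if and only if |x_i - x_j| ≤ 1 for all i, j (i.e., x is a Nash equilibrium). -/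
open Finset

theorem stmt_10 (m n : ℕ) (hm : 0 < m) (hn : 0 < n) (x : Fin n → ℕ)
    (hsum : ∑ i, x i = m) :
    let r : ℕ := m % n
    let Φ : ℝ := ∑ i, ((x i : ℝ) - (m : ℝ) / n) ^ 2
    Φ ≥ (r : ℝ) * (1 - (r : ℝ) / n)
    ∧ (Φ = (r : ℝ) * (1 - (r : ℝ) / n) ↔ ∀ i j, |(x i : ℤ) - (x j : ℤ)| ≤ 1) := by
  intro r Φ
  have hr : r = m % n := rfl
  have hΦ : Φ = ∑ i, ((x i : ℝ) - (m : ℝ) / n) ^ 2 := rfl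
  set q := m / n with hqdef
  have hmn : n * q + r = m := by rw [hr, hqdef]; exact Nat.div_add_mod m n
  have hrn : r < n := by rw [hr]; exact Nat.mod_lt m hn
  have hnR : (0:ℝ) < n := by exact_mod_cast hn
  have hcast : (m:ℝ) = n * q + r := by exact_mod_cast hmn.symm
  have hsR : ∑ i, (x i : ℝ) = (m : ℝ) := by exact_mod_cast hsum
  have key : Φ = (∑ i, ((x i : ℝ) - q) * ((x i : ℝ) - q - 1)) + (r:ℝ) * (1 - (r:ℝ)/n) := by
    rw [hΦ]
    have expand : ∀ i ∈ (univ : Finset (Fin n)), ((x i : ℝ) - (m:ℝ)/n)^2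
        = ((x i : ℝ) - q) * ((x i : ℝ) - q - 1)
          + (x i : ℝ) * (2*((q:ℝ) - (m:ℝ)/n) + 1)
          + (((q:ℝ) - (m:ℝ)/n)^2 - (q:ℝ)*(2*((q:ℝ) - (m:ℝ)/n) + 1)) := by
      intro i _; ring
    rw [Finset.sum_congr rfl expand, Finset.sum_add_distrib, Finset.sum_add_distrib,
      ← Finset.sum_mul, hsR, Finset.sum_const, Finset.card_univ, Fintype.card_fin,
      nsmul_eq_mul]
    rw [hcast]
    field_simp
    ring
  have hfnn : ∀ i ∈ (univ : Finset (Fin n)),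
      (0:ℝ) ≤ ((x i : ℝ) - q) * ((x i : ℝ) - q - 1) := by
    intro i _
    rcases le_or_gt (x i) q with h | h
    · have h' : (x i:ℝ) ≤ q := by exact_mod_cast h
      nlinarith
    · have h' : (q:ℝ) + 1 ≤ x i := by exact_mod_cast h
      nlinarith
  have h1 : Φ ≥ (r : ℝ) * (1 - (r : ℝ) / n) := by
    have := Finset.sum_nonneg hfnn
    rw [key]; linarith
  have hbal : (Φ = (r:ℝ)*(1 - (r:ℝ)/n)) ↔ ∀ i, x i = q ∨ x i = q + 1 := by
    rw [key]
    constructor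
    · intro h0 i
      have hz : ∑ i, ((x i : ℝ) - q) * ((x i : ℝ) - q - 1) = 0 := by linarith
      have hiz := (Finset.sum_eq_zero_iff_of_nonneg hfnn).mp hz i (mem_univ i)
      rcases mul_eq_zero.mp hiz with h | h
      · left
        have : (x i:ℝ) = q := by linarith
        exact_mod_cast this
      · right
        have : (x i:ℝ) = (q:ℝ) + 1 := by linarith
        exact_mod_cast this
    · intro hall
      have hz : ∑ i, ((x i : ℝ) - q) * ((x i : ℝ) - q - 1) = 0 :=
        Finset.sum_eq_zero (fun i _ => by
          rcases hall i with h | h <;> rw [h] <;> push_cast <;> ring)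
      rw [hz]; ring
  have hfin : (∀ i, x i = q ∨ x i = q + 1) ↔ ∀ i j, |(x i:ℤ) - (x j:ℤ)| ≤ 1 := by
    constructor
    · intro h i j
      rw [abs_le]
      rcases h i with h1 | h1 <;> rcases h j with h2 | h2 <;> omega
    · intro h i
      have hb : ∀ j, (x i : ℤ) - 1 ≤ (x j : ℤ) ∧ (x j : ℤ) ≤ (x i : ℤ) + 1 := by
        intro j
        have h1 := abs_le.mp (h i j)
        omega
      by_contra hcon
      push_neg at hcon
      obtain ⟨hne1, hne2⟩ := hcon
      rcases Nat.lt_or_ge (x i) q with hlt | hge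
      · have hle : ∀ j ∈ (univ : Finset (Fin n)), x j ≤ q := by
          intro j _; have := hb j; omega
        have hlt2 : ∑ j, x j < ∑ _j : Fin n, q :=
          Finset.sum_lt_sum hle ⟨i, mem_univ i, hlt⟩
        rw [hsum, Finset.sum_const, Finset.card_univ, Fintype.card_fin, smul_eq_mul] at hlt2
        have hle2 : n * q ≤ m := hmn ▸ Nat.le_add_right _ _
        exact absurd hlt2 (not_lt.mpr hle2)
      · have hxi : q + 2 ≤ x i := by omega
        have hge2 : ∀ j ∈ (univ : Finset (Fin n)), q + 1 ≤ x j := by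
          intro j _; have := hb j; omega
        have hsl : ∑ _j : Fin n, (q+1) ≤ ∑ j, x j := Finset.sum_le_sum hge2
        rw [hsum, Finset.sum_const, Finset.card_univ, Fintype.card_fin, smul_eq_mul] at hsl
        rw [Nat.mul_succ, ← hmn] at hsl
        have hnr : n ≤ r := Nat.le_of_add_le_add_left hsl
        exact absurd hnr (not_le.mpr hrn)
  exact ⟨h1, hbal.trans hfin⟩
end

section
/- Let m be an even positive integer and let y be an integer with 16 ≤ y ≤ m/2. Let T be a binomial random variable with parameters N = m/2 + y and p = 2y/(m + 2y), so E[T] = y. Then for every integer j with |j| ≤ y^{1/4}, P(T = y + j) ≥ (1/2)·P(T = y). -/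
/-!
With `N = t + y` trials and success probability `p = y / (t + y)`, the mean is `y`, and
consecutive binomial weights differ by the factor `(N - κ) p / ((κ + 1) (1 - p))`. For every
step between `y` and `y ± k` with `k ≤ y ≤ t` this factor (or its inverse, going down) is at
least `(1 - k / y) ^ 2`, so the weight at `y ± k` is at least `(1 - k / y) ^ (2 k)` times the
weight at `y`. By Bernoulli's inequality this is at least `1 - 2 k ^ 2 / y ≥ 1 / 2` as soon as
`4 k ^ 2 ≤ y`, which `k ≤ y ^ (1 / 4)` and `y ≥ 16` guarantee.
-/

noncomputable def binomialWeight (N : ℕ) (p : ℝ) (k : ℕ) : ℝ :=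
  N.choose k * p ^ k * (1 - p) ^ (N - k)

namespace binomialWeight

variable {N : ℕ} {p : ℝ}

lemma nonneg (hp0 : 0 ≤ p) (hp1 : p ≤ 1) (k : ℕ) : 0 ≤ binomialWeight N p k := by
  unfold binomialWeight
  have : 0 ≤ 1 - p := by linarith
  positivity

lemma succ_mul (k : ℕ) :
    binomialWeight N p (k + 1) * ((k + 1) * (1 - p)) =
      binomialWeight N p k * ((N - k : ℕ) * p) := by
  unfold binomialWeight
  rcases lt_or_ge k N with hk | hk
  · have hchoose : (N.choose (k + 1) : ℝ) * (k + 1) = N.choose k * (N - k : ℕ) := by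
      exact_mod_cast Nat.choose_succ_right_eq N k
    rw [show N - k = N - (k + 1) + 1 by omega] at hchoose ⊢
    linear_combination p ^ (k + 1) * (1 - p) ^ (N - (k + 1) + 1) * hchoose
  · simp [Nat.choose_eq_zero_of_lt (Nat.lt_succ_of_le hk), Nat.sub_eq_zero_of_le hk]

lemma mul_le_succ {r : ℝ} {k : ℕ} (hp0 : 0 ≤ p) (hp1 : p < 1)
    (h : r * ((k + 1) * (1 - p)) ≤ (N - k : ℕ) * p) :
    r * binomialWeight N p k ≤ binomialWeight N p (k + 1) := by
  have hpos : 0 < ((k : ℝ) + 1) * (1 - p) := by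
    have : 0 < 1 - p := by linarith
    positivity
  refine le_of_mul_le_mul_right ?_ hpos
  calc r * binomialWeight N p k * ((k + 1) * (1 - p))
      = binomialWeight N p k * (r * ((k + 1) * (1 - p))) := by ring
    _ ≤ binomialWeight N p k * ((N - k : ℕ) * p) :=
      mul_le_mul_of_nonneg_left h (nonneg hp0 hp1.le k)
    _ = binomialWeight N p (k + 1) * ((k + 1) * (1 - p)) := (succ_mul k).symm

lemma mul_succ_le {r : ℝ} {k : ℕ} (hp0 : 0 < p) (hp1 : p ≤ 1) (hk : k < N)
    (h : r * ((N - k : ℕ) * p) ≤ (k + 1) * (1 - p)) :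
    r * binomialWeight N p (k + 1) ≤ binomialWeight N p k := by
  have hpos : 0 < ((N - k : ℕ) : ℝ) * p := by
    have : 0 < N - k := by omega
    positivity
  refine le_of_mul_le_mul_right ?_ hpos
  calc r * binomialWeight N p (k + 1) * ((N - k : ℕ) * p)
      = binomialWeight N p (k + 1) * (r * ((N - k : ℕ) * p)) := by ring
    _ ≤ binomialWeight N p (k + 1) * ((k + 1) * (1 - p)) :=
      mul_le_mul_of_nonneg_left h (nonneg hp0.le hp1 _)
    _ = binomialWeight N p k * ((N - k : ℕ) * p) := succ_mul k

end binomialWeight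

lemma pow_mul_le_of_forall_mul_le {g : ℕ → ℝ} {r : ℝ} (hr : 0 ≤ r) {k : ℕ}
    (h : ∀ i < k, r * g i ≤ g (i + 1)) : r ^ k * g 0 ≤ g k := by
  induction k with
  | zero => simp
  | succ k ih =>
    calc r ^ (k + 1) * g 0 = r * (r ^ k * g 0) := by ring
      _ ≤ r * g k := mul_le_mul_of_nonneg_left (ih fun i hi => h i (by omega)) hr
      _ ≤ g (k + 1) := h k (by omega)

lemma four_mul_sq_le_of_le_rpow_quarter {k y : ℝ} (hk : 0 ≤ k) (hy : 16 ≤ y)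
    (hky : k ≤ y ^ ((1 : ℝ) / 4)) : 4 * k ^ 2 ≤ y := by
  have hk4 : k ^ 4 ≤ y := by
    calc k ^ 4 ≤ (y ^ ((1 : ℝ) / 4)) ^ 4 := pow_le_pow_left₀ hk hky 4
      _ = y := by
        rw [one_div, show (4 : ℝ) = ((4 : ℕ) : ℝ) by norm_num]
        exact Real.rpow_inv_natCast_pow (by linarith) (by norm_num)
  nlinarith [sq_nonneg (k ^ 2)]

lemma half_le_one_sub_div_pow {k : ℕ} {y : ℝ} (hy : 0 < y) (hk : 4 * (k : ℝ) ^ 2 ≤ y) :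
    1 / 2 ≤ (1 - k / y) ^ (2 * k) := by
  have hkk : (k : ℝ) ≤ k ^ 2 := by
    rcases k.eq_zero_or_pos with rfl | hk0
    · simp
    · nlinarith [(Nat.one_le_cast (α := ℝ)).2 hk0]
  have hky : (k : ℝ) / y ≤ 2 := by rw [div_le_iff₀ hy]; nlinarith
  calc (1 : ℝ) / 2 ≤ 1 + ((2 * k : ℕ) : ℝ) * -(k / y) := by
        push_cast
        rw [mul_neg, ← mul_div_assoc, ← sub_eq_add_neg, le_sub_comm, div_le_iff₀ hy]
        linarith
    _ ≤ (1 - k / y) ^ (2 * k) := by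
        rw [sub_eq_add_neg]; exact one_add_mul_le_pow (by linarith) _

section Centered

variable {t y k : ℝ}

lemma sub_div_sq_mul_le_up {i : ℝ} (hy : 0 < y) (hyt : y ≤ t) (hi : 0 ≤ i)
    (hik : i + 1 ≤ k) (hky : k ≤ y) :
    ((y - k) / y) ^ 2 * ((y + i + 1) * (t / (t + y))) ≤ (t - i) * (y / (t + y)) := by
  have h1 : (y - k) * (y + i + 1) ≤ y * y := by nlinarith
  have h2 : (y - k) * t ≤ (t - i) * y := by nlinarith
  have key := mul_le_mul h1 h2 (by nlinarith) (by nlinarith)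
  have : 0 < t + y := by linarith
  field_simp
  nlinarith [key]

lemma sub_div_sq_mul_le_down {i : ℝ} (hy : 0 < y) (hyt : y ≤ t) (hi : 0 ≤ i)
    (hik : i + 1 ≤ k) (hky : k ≤ y) :
    ((y - k) / y) ^ 2 * ((t + i + 1) * (y / (t + y))) ≤ (y - i) * (t / (t + y)) := by
  have h1 : (y - k) * (t + i + 1) ≤ y * t := by nlinarith
  have h2 : (y - k) * y ≤ (y - i) * y := by nlinarith
  have key := mul_le_mul h1 h2 (by nlinarith) (by nlinarith)
  have : 0 < t + y := by linarith
  field_simp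
  nlinarith [key]

end Centered

namespace binomialWeight

variable {t y k : ℕ}

lemma half_mul_le_add (hy : 0 < y) (hyt : y ≤ t) (hk : 4 * (k : ℝ) ^ 2 ≤ y) :
    1 / 2 * binomialWeight (t + y) (y / (t + y)) y ≤
      binomialWeight (t + y) (y / (t + y)) (y + k) := by
  have hy' : (0 : ℝ) < y := by exact_mod_cast hy
  have hky : k ≤ y := by
    have : 4 * k ^ 2 ≤ y := by exact_mod_cast hk
    nlinarith
  have hp0 : (0 : ℝ) ≤ y / (t + y) := by positivity
  have hp1 : (y : ℝ) / (t + y) < 1 := by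
    rw [div_lt_one (by positivity)]; exact_mod_cast (by omega : y < t + y)
  have h1p : 1 - (y : ℝ) / (t + y) = t / (t + y) := by field_simp; ring
  have hstep : ∀ i < k, ((y - k) / y : ℝ) ^ 2 * binomialWeight (t + y) (y / (t + y)) (y + i) ≤
      binomialWeight (t + y) (y / (t + y)) (y + (i + 1)) := by
    intro i hi
    refine mul_le_succ hp0 hp1 ?_
    rw [h1p, show t + y - (y + i) = t - i by omega, Nat.cast_sub (by omega)]
    push_cast
    exact sub_div_sq_mul_le_up hy' (by exact_mod_cast hyt) i.cast_nonneg
      (by exact_mod_cast hi) (by exact_mod_cast hky)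
  calc 1 / 2 * binomialWeight (t + y) (y / (t + y)) y
      ≤ (((y - k) / y : ℝ) ^ 2) ^ k * binomialWeight (t + y) (y / (t + y)) y := by
        rw [← pow_mul, sub_div, div_self hy'.ne']
        exact mul_le_mul_of_nonneg_right (half_le_one_sub_div_pow hy' hk) (nonneg hp0 hp1.le _)
    _ ≤ binomialWeight (t + y) (y / (t + y)) (y + k) :=
        pow_mul_le_of_forall_mul_le (g := fun i => binomialWeight _ _ (y + i)) (sq_nonneg _) hstep

lemma half_mul_le_sub (hy : 0 < y) (hyt : y ≤ t) (hk : 4 * (k : ℝ) ^ 2 ≤ y) :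
    1 / 2 * binomialWeight (t + y) (y / (t + y)) y ≤
      binomialWeight (t + y) (y / (t + y)) (y - k) := by
  have hy' : (0 : ℝ) < y := by exact_mod_cast hy
  have hky : k ≤ y := by
    have : 4 * k ^ 2 ≤ y := by exact_mod_cast hk
    nlinarith
  have hp0 : (0 : ℝ) < y / (t + y) := by positivity
  have hp1 : (y : ℝ) / (t + y) ≤ 1 := by
    rw [div_le_one (by positivity)]; exact_mod_cast (by omega : y ≤ t + y)
  have h1p : 1 - (y : ℝ) / (t + y) = t / (t + y) := by field_simp; ring
  have hstep : ∀ i < k, ((y - k) / y : ℝ) ^ 2 * binomialWeight (t + y) (y / (t + y)) (y - i) ≤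
      binomialWeight (t + y) (y / (t + y)) (y - (i + 1)) := by
    intro i hi
    rw [show y - i = y - (i + 1) + 1 by omega]
    refine mul_succ_le hp0 hp1 (by omega) ?_
    rw [h1p, show t + y - (y - (i + 1)) = t + i + 1 by omega, Nat.cast_sub (by omega)]
    push_cast
    rw [show (y : ℝ) - (i + 1) + 1 = y - i by ring]
    exact sub_div_sq_mul_le_down hy' (by exact_mod_cast hyt) i.cast_nonneg
      (by exact_mod_cast hi) (by exact_mod_cast hky)
  calc 1 / 2 * binomialWeight (t + y) (y / (t + y)) y
      ≤ (((y - k) / y : ℝ) ^ 2) ^ k * binomialWeight (t + y) (y / (t + y)) y := by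
        rw [← pow_mul, sub_div, div_self hy'.ne']
        exact mul_le_mul_of_nonneg_right (half_le_one_sub_div_pow hy' hk) (nonneg hp0.le hp1 _)
    _ ≤ binomialWeight (t + y) (y / (t + y)) (y - k) :=
        pow_mul_le_of_forall_mul_le (g := fun i => binomialWeight _ _ (y - i)) (sq_nonneg _) hstep

end binomialWeight

theorem stmt_14 (m y : ℕ) (hm : Even m) (hy : 16 ≤ y) (hym : y ≤ m / 2) :
    let N : ℕ := m / 2 + y
    let p : ℝ := 2 * y / (m + 2 * y)
    let f : ℕ → ℝ := fun k => (N.choose k : ℝ) * p ^ k * (1 - p) ^ (N - k)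
    ∀ j : ℤ, (|j| : ℝ) ≤ (y : ℝ) ^ ((1 : ℝ) / 4) →
      f ((y : ℤ) + j).toNat ≥ (1 / 2) * f y := by
  intro N p f j hj
  obtain ⟨t, rfl⟩ := hm
  have hN : N = t + y := by omega
  have hp : p = y / (t + y) := by
    simp only [p]; push_cast; field_simp; ring
  have hf : f = binomialWeight (t + y) (y / (t + y)) := by
    rw [← hN, ← hp]; rfl
  obtain ⟨k, rfl | rfl⟩ := Int.eq_nat_or_neg j
  all_goals
    have hk : 4 * (k : ℝ) ^ 2 ≤ y :=
      four_mul_sq_le_of_le_rpow_quarter k.cast_nonneg (by exact_mod_cast hy) (by simpa using hj)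
    rw [hf, ge_iff_le]
  · rw [show ((y : ℤ) + k).toNat = y + k by omega]
    exact binomialWeight.half_mul_le_add (by omega) (by omega) hk
  · rw [show ((y : ℤ) + -k).toNat = y - k by omega]
    exact binomialWeight.half_mul_le_sub (by omega) (by omega) hk
end

section
/- Let m be even, y an integer with y ≥ 16 and y ≤ m/2, and T ~ Binomial(m/2 + y, 2y/(m + 2y)), so E[T] = y. Then P(T = y) ≤ 2/(1 + 2⌊y^{1/4}⌋), and consequently P(|T - y| ≤ y^{1/10}) < 3·y^{-3/20}. -/
/-!
When `n p = y`, the ratio `binomPMF n p (k + 1) / binomPMF n p k = (n - k) p / ((k + 1) (1 - p))`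
is at least `1` for `k < y` and at most `1` for `k ≥ y`, so the mean `y` is a mode. If moreover
`p ≤ 1/2`, each step away from the mean within distance `b` loses at most a factor `1 - 2b/y`,
so by Bernoulli's inequality all `2b + 1` values within `b` of the mean carry at least half the
mass of the mean once `4 b² ≤ y`. Total mass `1` then gives `P(T = y) ≤ 2 / (1 + 2b)` for
`b = ⌊y^{1/4}⌋`. The window `|k - y| ≤ y^{1/10}` contains at most `2 ⌊y^{1/10}⌋ + 1` values, each
of mass at most `P(T = y)`; with `s = y^{1/20}` the final estimate is an inequality between
powers of `s`.
-/

open Finset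

noncomputable def binomPMF (n : ℕ) (p : ℝ) (k : ℕ) : ℝ :=
  n.choose k * p ^ k * (1 - p) ^ (n - k)

section BinomPMF

variable {n : ℕ} {p : ℝ}

lemma binomPMF_nonneg (hp₀ : 0 ≤ p) (hp₁ : p ≤ 1) (k : ℕ) : 0 ≤ binomPMF n p k := by
  have : 0 ≤ 1 - p := sub_nonneg.mpr hp₁
  unfold binomPMF
  positivity

lemma sum_range_binomPMF : ∑ k ∈ range (n + 1), binomPMF n p k = 1 := by
  have h := add_pow p (1 - p) n
  rw [add_sub_cancel, one_pow] at h
  rw [h]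
  exact sum_congr rfl fun k _ ↦ by unfold binomPMF; ring

lemma binomPMF_succ_mul (k : ℕ) :
    binomPMF n p (k + 1) * ((k + 1) * (1 - p)) = binomPMF n p k * ((n - k : ℕ) * p) := by
  rcases lt_or_ge k n with hk | hk
  · have hchoose : (n.choose (k + 1) : ℝ) * (k + 1) = n.choose k * (n - k : ℕ) := by
      exact_mod_cast Nat.choose_succ_right_eq n k
    have hpow : (1 - p) ^ (n - k) = (1 - p) ^ (n - (k + 1)) * (1 - p) := by
      rw [← pow_succ]; congr 1; omega
    unfold binomPMF
    rw [hpow]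
    linear_combination p ^ k * p * (1 - p) ^ (n - (k + 1)) * (1 - p) * hchoose
  · simp [binomPMF, Nat.choose_eq_zero_of_lt (Nat.lt_succ_of_le hk), Nat.sub_eq_zero_of_le hk]

lemma mul_binomPMF_le_succ (hp₀ : 0 ≤ p) (hp₁ : p < 1) {r : ℝ} {k : ℕ}
    (h : r * ((k + 1) * (1 - p)) ≤ (n - k : ℕ) * p) :
    r * binomPMF n p k ≤ binomPMF n p (k + 1) := by
  have hu : 0 < ((k : ℝ) + 1) * (1 - p) := mul_pos (by positivity) (sub_pos.mpr hp₁)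
  refine le_of_mul_le_mul_right ?_ hu
  calc r * binomPMF n p k * ((k + 1) * (1 - p))
      = binomPMF n p k * (r * ((k + 1) * (1 - p))) := by ring
    _ ≤ binomPMF n p k * ((n - k : ℕ) * p) :=
      mul_le_mul_of_nonneg_left h (binomPMF_nonneg hp₀ hp₁.le k)
    _ = binomPMF n p (k + 1) * ((k + 1) * (1 - p)) := (binomPMF_succ_mul k).symm

lemma mul_binomPMF_succ_le (hp₀ : 0 ≤ p) (hp₁ : p < 1) {r : ℝ} {k : ℕ}
    (h : r * ((n - k : ℕ) * p) ≤ (k + 1) * (1 - p)) :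
    r * binomPMF n p (k + 1) ≤ binomPMF n p k := by
  have hu : 0 < ((k : ℝ) + 1) * (1 - p) := mul_pos (by positivity) (sub_pos.mpr hp₁)
  refine le_of_mul_le_mul_right ?_ hu
  calc r * binomPMF n p (k + 1) * ((k + 1) * (1 - p))
      = binomPMF n p k * (r * ((n - k : ℕ) * p)) := by rw [mul_assoc, binomPMF_succ_mul]; ring
    _ ≤ binomPMF n p k * ((k + 1) * (1 - p)) :=
      mul_le_mul_of_nonneg_left h (binomPMF_nonneg hp₀ hp₁.le k)

lemma binomPMF_le_binomPMF_of_mul_eq (hp₀ : 0 ≤ p) (hp₁ : p < 1) {y : ℕ} (hy : n * p = y)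
    (k : ℕ) : binomPMF n p k ≤ binomPMF n p y := by
  have hyn : y ≤ n := by
    exact_mod_cast hy ▸ mul_le_of_le_one_right n.cast_nonneg hp₁.le
  rcases le_total k y with hk | hk
  · induction hk using Nat.decreasingInduction with
    | of_succ k hk ih =>
      refine le_trans ?_ ih
      simpa using mul_binomPMF_le_succ (r := 1) hp₀ hp₁ (n := n) (k := k) (by
        have : (k : ℝ) + 1 ≤ y := by exact_mod_cast hk
        rw [Nat.cast_sub (by omega)]
        nlinarith)
    | self => rfl
  · induction k, hk using Nat.le_induction with
    | base => rfl
    | succ k hk ih =>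
      refine le_trans ?_ ih
      simpa using mul_binomPMF_succ_le (r := 1) hp₀ hp₁ (n := n) (k := k) (by
        have : (y : ℝ) ≤ k := by exact_mod_cast hk
        rcases le_total k n with hkn | hkn
        · rw [Nat.cast_sub hkn]; nlinarith
        · rw [Nat.sub_eq_zero_of_le hkn, Nat.cast_zero]; nlinarith)

end BinomPMF

section NearMean

variable {n : ℕ} {p : ℝ} {y b : ℕ}

lemma two_mul_le_of_mul_eq (hp : p ≤ 1 / 2) (hy : n * p = y) : 2 * y ≤ n := by
  have : (2 * y : ℝ) ≤ n := by rw [← hy]; nlinarith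
  exact_mod_cast this

lemma one_sub_two_mul_div_nonneg (hb : 2 * b ≤ y) : (0 : ℝ) ≤ 1 - 2 * b / y := by
  rcases Nat.eq_zero_or_pos y with rfl | hy
  · simp
  · rw [sub_nonneg, div_le_one (by exact_mod_cast hy)]; exact_mod_cast hb

lemma one_sub_two_mul_div_mul_le (hy : 0 < y) {j : ℕ} (hj : j < b) :
    (1 - 2 * b / y : ℝ) * (y + j + 1) ≤ y - j := by
  have hyR : (0 : ℝ) < y := by exact_mod_cast hy
  have hjR : (j : ℝ) + 1 ≤ b := by exact_mod_cast hj
  have : (2 * b : ℝ) ≤ 2 * b / y * (y + j + 1) := by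
    rw [div_mul_eq_mul_div, le_div_iff₀ hyR]
    nlinarith
  nlinarith

lemma pow_mul_binomPMF_le_add (hp₀ : 0 ≤ p) (hp : p ≤ 1 / 2) (hy : n * p = y)
    (hb : 2 * b ≤ y) {j : ℕ} (hj : j ≤ b) :
    (1 - 2 * b / y : ℝ) ^ j * binomPMF n p y ≤ binomPMF n p (y + j) := by
  have hr := one_sub_two_mul_div_nonneg hb
  have hn := two_mul_le_of_mul_eq hp hy
  induction j with
  | zero => simp
  | succ j ih =>
    have hjb : j < b := hj
    have hstep := one_sub_two_mul_div_mul_le (y := y) (by omega) hjb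
    calc (1 - 2 * b / y : ℝ) ^ (j + 1) * binomPMF n p y
        = (1 - 2 * b / y) * ((1 - 2 * b / y) ^ j * binomPMF n p y) := by ring
      _ ≤ (1 - 2 * b / y) * binomPMF n p (y + j) := mul_le_mul_of_nonneg_left (ih hjb.le) hr
      _ ≤ binomPMF n p (y + j + 1) := mul_binomPMF_le_succ hp₀ (by linarith) (by
          rw [Nat.cast_sub (by omega)]
          push_cast
          nlinarith [mul_le_mul_of_nonneg_right hstep (by linarith : (0 : ℝ) ≤ 1 - p),
            mul_nonneg (Nat.cast_nonneg j : (0 : ℝ) ≤ j) (by linarith : (0 : ℝ) ≤ 1 - 2 * p)])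

lemma pow_mul_binomPMF_le_sub (hp₀ : 0 ≤ p) (hp : p ≤ 1 / 2) (hy : n * p = y)
    (hb : 2 * b ≤ y) {j : ℕ} (hj : j ≤ b) :
    (1 - 2 * b / y : ℝ) ^ j * binomPMF n p y ≤ binomPMF n p (y - j) := by
  have hr := one_sub_two_mul_div_nonneg hb
  have hn := two_mul_le_of_mul_eq hp hy
  induction j with
  | zero => simp
  | succ j ih =>
    have hjb : j < b := hj
    have hstep := one_sub_two_mul_div_mul_le (y := y) (by omega) hjb
    have hk : y - (j + 1) + 1 = y - j := by omega
    calc (1 - 2 * b / y : ℝ) ^ (j + 1) * binomPMF n p y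
        = (1 - 2 * b / y) * ((1 - 2 * b / y) ^ j * binomPMF n p y) := by ring
      _ ≤ (1 - 2 * b / y) * binomPMF n p (y - (j + 1) + 1) := by
          rw [hk]; exact mul_le_mul_of_nonneg_left (ih hjb.le) hr
      _ ≤ binomPMF n p (y - (j + 1)) := mul_binomPMF_succ_le hp₀ (by linarith) (by
          rw [Nat.cast_sub (by omega : y - (j + 1) ≤ n), Nat.cast_sub (by omega : j + 1 ≤ y)]
          push_cast
          have hmass : (n - (y - (j + 1) : ℝ)) * p ≤ (y + j + 1) * (1 - p) := by nlinarith
          calc (1 - 2 * b / y : ℝ) * ((n - (y - (j + 1) : ℝ)) * p)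
              ≤ (1 - 2 * b / y) * ((y + j + 1) * (1 - p)) := mul_le_mul_of_nonneg_left hmass hr
            _ ≤ (y - j) * (1 - p) := by
                rw [← mul_assoc]; exact mul_le_mul_of_nonneg_right hstep (by linarith)
            _ = (y - (j + 1) + 1) * (1 - p) := by ring)

lemma half_le_one_sub_two_mul_div_pow (hb : 4 * b ^ 2 ≤ y) :
    (1 / 2 : ℝ) ≤ (1 - 2 * b / y) ^ b := by
  have hby : (b : ℝ) ≤ y := by exact_mod_cast (Nat.le_self_pow two_ne_zero b).trans (by omega)
  have hsmall : 2 * (b : ℝ) ^ 2 / y ≤ 1 / 2 := by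
    rcases Nat.eq_zero_or_pos y with rfl | hy
    · simp
    · rw [div_le_iff₀ (by exact_mod_cast hy)]
      have : (4 * b ^ 2 : ℝ) ≤ y := by exact_mod_cast hb
      linarith
  have hy₀ : (0 : ℝ) ≤ y := y.cast_nonneg
  have hbern := one_add_mul_le_pow (a := -(2 * b / y : ℝ)) (by
    have : (2 * b / y : ℝ) ≤ 2 := by
      rcases hy₀.eq_or_lt with hy | hy
      · simp [← hy]
      · rw [div_le_iff₀ hy]; linarith
    linarith) b
  calc (1 / 2 : ℝ) ≤ 1 + b * -(2 * b / y) := by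
        have : (b : ℝ) * (2 * b / y) = 2 * b ^ 2 / y := by ring
        linarith
    _ ≤ (1 - 2 * b / y) ^ b := by rwa [← sub_eq_add_neg] at hbern

lemma binomPMF_mean_div_two_le (hp₀ : 0 ≤ p) (hp : p ≤ 1 / 2) (hy : n * p = y)
    (hb : 4 * b ^ 2 ≤ y) {k : ℕ} (hk : k ∈ Icc (y - b) (y + b)) :
    binomPMF n p y / 2 ≤ binomPMF n p k := by
  have hb₂ : 2 * b ≤ y := by nlinarith [Nat.le_self_pow two_ne_zero b]
  have hr := one_sub_two_mul_div_nonneg hb₂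
  have hr₁ : 1 - 2 * b / y ≤ (1 : ℝ) := by
    have : (0 : ℝ) ≤ 2 * b / y := by positivity
    linarith
  have hF := binomPMF_nonneg hp₀ (by linarith) (n := n) y
  have hpow : ∀ j ≤ b, binomPMF n p y / 2 ≤ (1 - 2 * b / y : ℝ) ^ j * binomPMF n p y :=
    fun j hj ↦ by
      nlinarith [half_le_one_sub_two_mul_div_pow hb, pow_le_pow_of_le_one hr hr₁ hj]
  rw [mem_Icc] at hk
  rcases le_total y k with hyk | hky
  · obtain ⟨j, rfl⟩ := Nat.exists_eq_add_of_le hyk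
    exact (hpow j (by omega)).trans (pow_mul_binomPMF_le_add hp₀ hp hy hb₂ (by omega))
  · obtain ⟨j, hj, rfl⟩ : ∃ j ≤ b, k = y - j := ⟨y - k, by omega, by omega⟩
    exact (hpow j hj).trans (pow_mul_binomPMF_le_sub hp₀ hp hy hb₂ hj)

lemma binomPMF_mean_le (hp₀ : 0 ≤ p) (hp : p ≤ 1 / 2) (hy : n * p = y) (hb : 4 * b ^ 2 ≤ y) :
    binomPMF n p y ≤ 2 / (1 + 2 * b) := by
  have hn := two_mul_le_of_mul_eq hp hy
  have hb₂ : b ≤ y := by nlinarith [Nat.le_self_pow two_ne_zero b]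
  have hcard : #(Icc (y - b) (y + b)) = 2 * b + 1 := by rw [Nat.card_Icc]; omega
  have hmass : (2 * b + 1 : ℕ) • (binomPMF n p y / 2) ≤ 1 :=
    calc (2 * b + 1 : ℕ) • (binomPMF n p y / 2)
        ≤ ∑ k ∈ Icc (y - b) (y + b), binomPMF n p k :=
          hcard ▸ card_nsmul_le_sum _ _ _ fun k hk ↦ binomPMF_mean_div_two_le hp₀ hp hy hb hk
      _ ≤ ∑ k ∈ range (n + 1), binomPMF n p k :=
          sum_le_sum_of_subset_of_nonneg
            (fun k hk ↦ by rw [mem_Icc] at hk; rw [mem_range]; omega)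
            fun k _ _ ↦ binomPMF_nonneg hp₀ (by linarith) k
      _ = 1 := sum_range_binomPMF
  rw [nsmul_eq_mul] at hmass
  push_cast at hmass
  rw [le_div_iff₀ (by positivity)]
  linarith

end NearMean

lemma card_filter_abs_sub_le (s : Finset ℕ) (y : ℕ) (r : ℝ) :
    #(s.filter fun k : ℕ ↦ |(k : ℝ) - y| ≤ r) ≤ 2 * ⌊r⌋₊ + 1 := by
  calc #(s.filter fun k : ℕ ↦ |(k : ℝ) - y| ≤ r)
      ≤ #(Icc (y - ⌊r⌋₊) (y + ⌊r⌋₊)) := card_le_card fun k hk ↦ by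
        have hr := Nat.lt_floor_add_one r
        obtain ⟨hk₁, hk₂⟩ := abs_le.mp (mem_filter.mp hk).2
        have h₁ : k < y + ⌊r⌋₊ + 1 := by exact_mod_cast (by linarith : (k : ℝ) < y + ⌊r⌋₊ + 1)
        have h₂ : y < k + ⌊r⌋₊ + 1 := by exact_mod_cast (by linarith : (y : ℝ) < k + ⌊r⌋₊ + 1)
        rw [mem_Icc]
        omega
    _ ≤ 2 * ⌊r⌋₊ + 1 := by rw [Nat.card_Icc]; omega

lemma sum_filter_abs_sub_binomPMF_le {n : ℕ} {p : ℝ} (hp₀ : 0 ≤ p) (hp₁ : p < 1) {y : ℕ}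
    (hy : n * p = y) (s : Finset ℕ) (r : ℝ) :
    ∑ k ∈ s.filter (fun k : ℕ ↦ |(k : ℝ) - y| ≤ r), binomPMF n p k
      ≤ (2 * ⌊r⌋₊ + 1) * binomPMF n p y := by
  calc ∑ k ∈ s.filter (fun k : ℕ ↦ |(k : ℝ) - y| ≤ r), binomPMF n p k
      ≤ #(s.filter fun k : ℕ ↦ |(k : ℝ) - y| ≤ r) • binomPMF n p y :=
        sum_le_card_nsmul _ _ _ fun k _ ↦ binomPMF_le_binomPMF_of_mul_eq hp₀ hp₁ hy k
    _ ≤ (2 * ⌊r⌋₊ + 1) * binomPMF n p y := by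
        rw [nsmul_eq_mul]
        gcongr
        · exact binomPMF_nonneg hp₀ hp₁.le y
        · exact_mod_cast card_filter_abs_sub_le s y r

section FloorBounds

variable {s : ℝ}

lemma four_mul_floor_sq_le (hs : 2 ≤ s ^ 5) : 4 * (⌊s ^ 5⌋₊ : ℝ) ^ 2 ≤ s ^ 20 := by
  have hb := Nat.floor_le (by linarith : (0 : ℝ) ≤ s ^ 5)
  have hb₀ : (0 : ℝ) ≤ ⌊s ^ 5⌋₊ := Nat.cast_nonneg _
  calc 4 * (⌊s ^ 5⌋₊ : ℝ) ^ 2 ≤ (s ^ 5) ^ 2 * (s ^ 5) ^ 2 := by gcongr; nlinarith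
    _ = s ^ 20 := by ring

lemma two_mul_floor_add_one_mul_lt (hs₀ : 0 ≤ s) (hs : 2 ≤ s ^ 5) :
    (2 * ⌊s ^ 2⌋₊ + 1 : ℝ) * (2 / (1 + 2 * ⌊s ^ 5⌋₊)) < 3 / s ^ 3 := by
  set a := ⌊s ^ 2⌋₊
  set b := ⌊s ^ 5⌋₊
  have hs₁ : 1 ≤ s := le_of_pow_le_pow_left₀ (by norm_num : 5 ≠ 0) hs₀ (by rw [one_pow]; linarith)
  have ha : (a : ℝ) ≤ s ^ 2 := Nat.floor_le (by positivity)
  have ha₁ : 1 ≤ a := Nat.le_floor (by rw [Nat.cast_one]; nlinarith)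
  have hb : s ^ 5 < b + 1 := Nat.lt_floor_add_one _
  have hb₂ : 2 ≤ b := Nat.le_floor (by norm_num; linarith)
  have hb₂' : (2 : ℝ) ≤ b := by exact_mod_cast hb₂
  have has : a * s ^ 3 ≤ s ^ 5 := by
    calc a * s ^ 3 ≤ s ^ 2 * s ^ 3 := by gcongr
      _ = s ^ 5 := by ring
  have key : (2 * a + 1) * 2 * s ^ 3 < 3 * (1 + 2 * b) := by
    rcases ha₁.eq_or_lt with ha₁ | ha₂
    · -- For `a = 1` the bound `s ^ 5 < b + 1` is too weak; it is sharpened to `s ^ 3 < b`.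
      have hs₃ : s ^ 3 < b := by
        refine lt_of_pow_lt_pow_left₀ 5 (by positivity) ?_
        calc (s ^ 3) ^ 5 = (s ^ 5) ^ 3 := by ring
          _ < ((b : ℝ) + 1) ^ 3 := by gcongr
          _ ≤ (b : ℝ) ^ 5 := by nlinarith [mul_nonneg (sub_nonneg.mpr hb₂') (sq_nonneg (b : ℝ))]
      rw [← ha₁]
      push_cast
      linarith
    · have ha₂' : (2 : ℝ) ≤ a := by exact_mod_cast ha₂
      nlinarith [pow_pos (by linarith : (0 : ℝ) < s) 3]
  rw [← mul_div_assoc, div_lt_div_iff₀ (by positivity) (by positivity)]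
  linarith

end FloorBounds

lemma rpow_one_div_twenty_pow {x : ℝ} (hx : 0 ≤ x) (k : ℕ) :
    (x ^ (1 / 20 : ℝ)) ^ k = x ^ ((k : ℝ) / 20) := by
  rw [← Real.rpow_natCast, ← Real.rpow_mul hx]
  ring_nf

theorem stmt_16 (m y : ℕ) (hm : Even m) (hy : 16 ≤ y) (hym : y ≤ m / 2) :
    let N : ℕ := m / 2 + y
    let p : ℝ := 2 * y / (m + 2 * y)
    let f : ℕ → ℝ := fun k => (N.choose k : ℝ) * p ^ k * (1 - p) ^ (N - k)
    f y ≤ 2 / (1 + 2 * (⌊(y : ℝ) ^ ((1 : ℝ) / 4)⌋₊ : ℝ))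
    ∧ (∑ k ∈ (Finset.range (N + 1)).filter
          (fun k : ℕ => |(k : ℝ) - (y : ℝ)| ≤ (y : ℝ) ^ ((1 : ℝ) / 10)), f k)
        < 3 * (y : ℝ) ^ (-(3 : ℝ) / 20) := by
  intro N p f
  obtain ⟨c, rfl⟩ := hm
  have hc : (c + c) / 2 = c := by omega
  have hyc : (y : ℝ) ≤ c := by exact_mod_cast (show y ≤ c by omega)
  have hy₀ : (0 : ℝ) < y := by positivity
  have hp₀ : 0 ≤ p := by positivity
  have hp : p ≤ 1 / 2 := by
    rw [div_le_iff₀ (by positivity)]; push_cast; linarith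
  have hNp : (N : ℝ) * p = y := by
    simp only [N, p, hc]; push_cast; field_simp; ring
  set s := (y : ℝ) ^ (1 / 20 : ℝ)
  have hpow := rpow_one_div_twenty_pow hy₀.le
  have hs₅ : (y : ℝ) ^ ((1 : ℝ) / 4) = s ^ 5 := by rw [hpow]; norm_num
  have hs₂ : (y : ℝ) ^ ((1 : ℝ) / 10) = s ^ 2 := by rw [hpow]; norm_num
  have hs₃ : (y : ℝ) ^ (-(3 : ℝ) / 20) = (s ^ 3)⁻¹ := by
    rw [hpow, ← Real.rpow_neg hy₀.le]; norm_num
  have hs₂₀ : (y : ℝ) = s ^ 20 := by rw [hpow]; norm_num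
  have hs₀ : 0 ≤ s := by positivity
  have hs : 2 ≤ s ^ 5 :=
    le_of_pow_le_pow_left₀ (by norm_num : 4 ≠ 0) (by positivity) (by
      rw [← pow_mul, ← hs₂₀]; exact_mod_cast (by norm_num : 2 ^ 4 ≤ 16).trans hy)
  have hb : 4 * ⌊s ^ 5⌋₊ ^ 2 ≤ y := by exact_mod_cast hs₂₀ ▸ four_mul_floor_sq_le hs
  have hmean : f y ≤ 2 / (1 + 2 * ⌊s ^ 5⌋₊) := binomPMF_mean_le hp₀ hp hNp hb
  rw [hs₅, hs₂, hs₃, ← div_eq_mul_inv]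
  refine ⟨hmean, ?_⟩
  calc ∑ k ∈ (range (N + 1)).filter (fun k : ℕ ↦ |(k : ℝ) - y| ≤ s ^ 2), f k
      ≤ (2 * ⌊s ^ 2⌋₊ + 1) * f y := sum_filter_abs_sub_binomPMF_le hp₀ (by linarith) hNp _ _
    _ ≤ (2 * ⌊s ^ 2⌋₊ + 1) * (2 / (1 + 2 * ⌊s ^ 5⌋₊)) := by gcongr
    _ < 3 / s ^ 3 := two_mul_floor_add_one_mul_lt hs₀ hs
end

section
/- Let (D_t) be a supermartingale with values in [0, B] ∩ ℤ, D_0 ≤ d, satisfying E[(D_{t+1} - D_t)² | D_t = x] ≥ V for all 0 < x < B. Let T = min{t : D_t ∈ {0, B}} and p = P(D_T = 0). Then p ≥ 1 - d/B and E[T | D_T = 0] ≤ B²/V. -/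
open MeasureTheory Filter
open scoped ENNReal

theorem stmt_19 {Ω : Type*} {m0 : MeasurableSpace Ω} {μ : Measure Ω}
    [IsProbabilityMeasure μ] (ℱ : Filtration ℕ m0)
    (D : ℕ → Ω → ℝ) (B d V : ℝ) (hB : 0 < B) (hV : 0 < V)
    (hsuper : Supermartingale D ℱ μ)
    (hrange : ∀ t ω, D t ω ∈ Set.Icc 0 B ∧ ∃ k : ℤ, D t ω = (k : ℝ))
    (h0 : ∀ ω, D 0 ω ≤ d)
    (hvar : ∀ t, ∀ᵐ ω ∂μ, 0 < D t ω → D t ω < B →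
      V ≤ (μ[fun ω' => (D (t + 1) ω' - D t ω') ^ 2 | ℱ t]) ω)
    (T : Ω → ℕ)
    (hTfin : ∀ ω, ∃ t, D t ω = 0 ∨ D t ω = B)
    (hT : ∀ ω, T ω = sInf {t | D t ω = 0 ∨ D t ω = B})
    (p : ℝ) (hp : p = (μ {ω | D (T ω) ω = 0}).toReal) :
    p ≥ 1 - d / B
    ∧ ∫ ω in {ω | D (T ω) ω = 0}, (T ω : ℝ) ∂μ ≤ (B ^ 2 / V) * p := by
  classical
  -- basic facts about D
  have hD0 : ∀ t ω, 0 ≤ D t ω := fun t ω => (hrange t ω).1.1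
  have hDB : ∀ t ω, D t ω ≤ B := fun t ω => (hrange t ω).1.2
  have hDint : ∀ t, Integrable (D t) μ := hsuper.2.2
  have hDmeas : ∀ t, Measurable (D t) :=
    fun t => ((hsuper.stronglyAdapted t).measurable).mono (ℱ.le t) le_rfl
  -- facts about T
  have hTspec : ∀ ω, D (T ω) ω = 0 ∨ D (T ω) ω = B := fun ω => by
    rw [hT]; exact Nat.sInf_mem (hTfin ω)
  have hTle : ∀ ω t, (D t ω = 0 ∨ D t ω = B) → T ω ≤ t := fun ω t h => by
    rw [hT]; exact Nat.sInf_le h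
  have hTgt : ∀ ω n, n < T ω → 0 < D n ω ∧ D n ω < B := by
    intro ω n h
    have h1 : ¬(D n ω = 0 ∨ D n ω = B) := fun hc => absurd (hTle ω n hc) (by omega)
    push_neg at h1
    exact ⟨lt_of_le_of_ne (hD0 n ω) (Ne.symm h1.1), lt_of_le_of_ne (hDB n ω) h1.2⟩
  -- T is a stopping time
  have hstop : IsStoppingTime ℱ (fun ω => WithTop.some (T ω)) := by
    intro n
    simp only [WithTop.coe_le_coe]
    have hset : {ω | T ω ≤ n} = ⋃ t ∈ Finset.Iic n, {ω | D t ω = 0 ∨ D t ω = B} := by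
      ext ω
      simp only [Set.mem_setOf_eq, Set.mem_iUnion, Finset.mem_Iic, exists_prop]
      constructor
      · intro h; exact ⟨T ω, h, hTspec ω⟩
      · rintro ⟨t, ht, hmem⟩; exact le_trans (hTle ω t hmem) ht
    rw [show {ω | T ω ≤ n} = (fun ω => T ω ≤ n) from rfl] at *
    show MeasurableSet[ℱ n] {ω | T ω ≤ n}
    rw [hset]
    refine MeasurableSet.biUnion (Finset.Iic n).countable_toSet fun t ht => ?_
    have htn : t ≤ n := Finset.mem_Iic.mp ht
    have h1 : MeasurableSet[ℱ t] {ω | D t ω = 0 ∨ D t ω = B} := by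
      have := (hsuper.stronglyAdapted t).measurable
      exact ((this (measurableSet_singleton 0)).union (this (measurableSet_singleton B)))
    exact ℱ.mono htn _ h1
  have hTmeasble : Measurable T := by
    refine measurable_to_countable' fun n => ?_
    have : MeasurableSet[ℱ n] {ω | T ω = n} := by simpa using hstop.measurableSet_eq n
    exact ℱ.le n _ this
  -- the stopped process X n ω = D (min n (T ω)) ω
  set X : ℕ → Ω → ℝ := fun n ω => D (min n (T ω)) ω with hX
  have hXmeas : ∀ n, StronglyMeasurable (X n) := fun n => by
    have h := hsuper.stronglyAdapted.stronglyMeasurable_stoppedProcess_of_discrete hstop n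
    convert h using 1; ext ω; simp only [stoppedProcess]; rw [← WithTop.coe_min]; rfl
  have hXbdd : ∀ n ω, 0 ≤ X n ω ∧ X n ω ≤ B := fun n ω => ⟨hD0 _ _, hDB _ _⟩
  have hbddint : ∀ (f : Ω → ℝ) (C : ℝ), AEStronglyMeasurable f μ → (∀ ω, |f ω| ≤ C) →
      Integrable f μ := fun f C hm hb =>
    Integrable.mono' (integrable_const C) hm (ae_of_all _ fun ω => by
      rw [Real.norm_eq_abs]; exact hb ω)
  have hXint : ∀ n, Integrable (X n) μ := fun n =>
    hbddint _ B (hXmeas n).aestronglyMeasurable fun ω => by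
      rcases hXbdd n ω with ⟨h1, h2⟩; rw [abs_le]; constructor <;> linarith
  have hGint : ∀ n, Integrable (fun ω => (B - X n ω) ^ 2) μ := fun n => by
    refine hbddint _ (B ^ 2) ((stronglyMeasurable_const.sub (hXmeas n)).pow _
      ).aestronglyMeasurable fun ω => ?_
    rcases hXbdd n ω with ⟨h1, h2⟩
    rw [abs_le]; constructor <;> nlinarith
  -- the sets A n = {n < T}
  set A : ℕ → Set Ω := fun n => {ω | n < T ω} with hA
  have hAmeas : ∀ n, MeasurableSet[ℱ n] (A n) := by
    intro n
    have : A n = {ω | T ω ≤ n}ᶜ := Set.ext fun ω => by simp only [hA, Set.mem_setOf_eq, Set.mem_compl_iff, not_le]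
    have h := hstop n; simp only [WithTop.coe_le_coe] at h
    rw [this]; exact h.compl
  have hAmeas0 : ∀ n, MeasurableSet (A n) := fun n => ℱ.le n _ (hAmeas n)
  have hAinterior : ∀ n ω, ω ∈ A n → 0 < D n ω ∧ D n ω < B := fun n ω h => hTgt ω n h
  -- pointwise step identities
  have hXstep : ∀ n ω, X (n + 1) ω - X n ω
      = Set.indicator (A n) (fun ω => D (n + 1) ω - D n ω) ω := by
    intro n ω
    by_cases h : ω ∈ A n
    · have h1 : min (n + 1) (T ω) = n + 1 := min_eq_left (by exact h)
      have h2 : min n (T ω) = n := min_eq_left (le_of_lt h)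
      rw [Set.indicator_of_mem h]; simp only [hX, h1, h2]
    · have hle : T ω ≤ n := by simpa [hA, not_lt] using h
      have h1 : min (n + 1) (T ω) = T ω := min_eq_right (by omega)
      have h2 : min n (T ω) = T ω := min_eq_right hle
      rw [Set.indicator_of_notMem h]; simp only [hX, h1, h2, sub_self]
  -- supermartingale step: E_{n+1} ≤ E_n
  have hE : ∀ n, ∫ ω, X (n + 1) ω ∂μ ≤ ∫ ω, X n ω ∂μ := by
    intro n
    have h1 : ∫ ω, X (n + 1) ω ∂μ - ∫ ω, X n ω ∂μ
        = ∫ ω, (X (n + 1) ω - X n ω) ∂μ := (integral_sub (hXint _) (hXint _)).symm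
    have h2 : ∫ ω, (X (n + 1) ω - X n ω) ∂μ
        = ∫ ω in A n, (D (n + 1) ω - D n ω) ∂μ := by
      rw [← integral_indicator (hAmeas0 n)]
      congr 1; ext ω; exact hXstep n ω
    have h3 : ∫ ω in A n, (D (n + 1) ω - D n ω) ∂μ
        = ∫ ω in A n, D (n + 1) ω ∂μ - ∫ ω in A n, D n ω ∂μ :=
      integral_sub ((hDint _).integrableOn) ((hDint _).integrableOn)
    have h4 := hsuper.setIntegral_le (Nat.le_succ n) (hAmeas n)
    linarith
  -- key step for the quadratic part
  have hG : ∀ n, V * (μ (A n)).toReal + ∫ ω, (B - X n ω) ^ 2 ∂μ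
      ≤ ∫ ω, (B - X (n + 1) ω) ^ 2 ∂μ := by
    intro n
    set ΔD : Ω → ℝ := fun ω => D (n + 1) ω - D n ω with hΔD
    have hΔDint : Integrable ΔD μ := (hDint _).sub (hDint _)
    have hΔDbdd : ∀ ω, |ΔD ω| ≤ B := fun ω => by
      have := hD0 (n+1) ω; have := hDB (n+1) ω; have := hD0 n ω; have := hDB n ω
      rw [abs_le]; constructor <;> simp only [hΔD] <;> linarith
    have hΔDsqint : Integrable (fun ω => ΔD ω ^ 2) μ := by
      refine hbddint _ (B ^ 2) ((((hDmeas (n+1)).sub (hDmeas n)).pow_const 2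
        ).aestronglyMeasurable) fun ω => ?_
      have h := abs_le.mp (hΔDbdd ω)
      rw [abs_le]
      constructor <;> nlinarith [sq_nonneg (ΔD ω), sq_nonneg B, h.1, h.2]
    -- quadratic pointwise identity
    have hid : ∀ ω, (B - X (n + 1) ω) ^ 2 - (B - X n ω) ^ 2
        = Set.indicator (A n) (fun ω => ΔD ω ^ 2 - 2 * ((B - D n ω) * ΔD ω)) ω := by
      intro ω
      by_cases h : ω ∈ A n
      · have h1 : min (n + 1) (T ω) = n + 1 := min_eq_left (by exact h)
        have h2 : min n (T ω) = n := min_eq_left (le_of_lt h)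
        rw [Set.indicator_of_mem h]; simp only [hX, h1, h2, hΔD]; ring
      · have hle : T ω ≤ n := by simpa [hA, not_lt] using h
        have h1 : min (n + 1) (T ω) = T ω := min_eq_right (by omega)
        have h2 : min n (T ω) = T ω := min_eq_right hle
        rw [Set.indicator_of_notMem h]; simp only [hX, h1, h2, sub_self]
    -- variance lower bound
    have hvarA : V * (μ (A n)).toReal ≤ ∫ ω in A n, ΔD ω ^ 2 ∂μ := by
      have hcond : ∫ ω in A n, ΔD ω ^ 2 ∂μ
          = ∫ ω in A n, (μ[fun ω' => (D (n + 1) ω' - D n ω') ^ 2 | ℱ n]) ω ∂μ :=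
        (setIntegral_condExp (ℱ.le n) hΔDsqint (hAmeas n)).symm
      rw [hcond]
      have hle : ∀ᵐ ω ∂μ.restrict (A n), V ≤ (μ[fun ω' => (D (n + 1) ω' - D n ω') ^ 2 | ℱ n]) ω := by
        filter_upwards [ae_restrict_of_ae (hvar n), ae_restrict_mem (hAmeas0 n)] with ω h1 h2
        exact h1 (hAinterior n ω h2).1 (hAinterior n ω h2).2
      calc V * (μ (A n)).toReal = ∫ _ω in A n, V ∂μ := by
            rw [setIntegral_const]; rw [smul_eq_mul]; rw [mul_comm]; rfl
        _ ≤ _ := setIntegral_mono_ae_restrict (integrableOn_const (measure_ne_top _ _))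
            integrable_condExp.integrableOn hle
    -- drift term is nonpositive
    have hdrift : ∫ ω in A n, (B - D n ω) * ΔD ω ∂μ ≤ 0 := by
      set g : Ω → ℝ := Set.indicator (A n) (fun ω => B - D n ω) with hg
      have hgsm : StronglyMeasurable[ℱ n] g :=
        (stronglyMeasurable_const.sub (hsuper.stronglyAdapted n)).indicator (hAmeas n)
      have hgnn : ∀ ω, 0 ≤ g ω :=
        fun ω => Set.indicator_nonneg (fun ω _ => sub_nonneg.mpr (hDB n ω)) ω
      have hgbdd : ∀ ω, |g ω| ≤ B := by
        intro ω
        rw [abs_of_nonneg (hgnn ω)]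
        by_cases h : ω ∈ A n
        · rw [hg, Set.indicator_of_mem h]; have := hD0 n ω; linarith
        · rw [hg, Set.indicator_of_notMem h]; linarith
      have hprodint : Integrable (g * ΔD) μ := by
        refine hbddint _ (B * B) ?_ fun ω => ?_
        · exact ((hgsm.mono (ℱ.le n)).mul
            ((hDmeas (n+1)).sub (hDmeas n)).stronglyMeasurable).aestronglyMeasurable
        · rw [Pi.mul_apply, abs_mul]
          exact mul_le_mul (hgbdd ω) (hΔDbdd ω) (abs_nonneg _) hB.le
      have heq : ∫ ω in A n, (B - D n ω) * ΔD ω ∂μ = ∫ ω, (g * ΔD) ω ∂μ := by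
        rw [← integral_indicator (hAmeas0 n)]
        congr 1; ext ω
        rw [Pi.mul_apply, hg]
        by_cases h : ω ∈ A n
        · rw [Set.indicator_of_mem h, Set.indicator_of_mem h]
        · rw [Set.indicator_of_notMem h, Set.indicator_of_notMem h, zero_mul]
      have hpull : μ[g * ΔD | ℱ n] =ᵐ[μ] g * μ[ΔD | ℱ n] :=
        condExp_mul_of_stronglyMeasurable_left hgsm hprodint hΔDint
      have hcondnp : μ[ΔD | ℱ n] ≤ᵐ[μ] 0 := by
        have h1 : μ[ΔD | ℱ n] =ᵐ[μ] μ[D (n+1) | ℱ n] - μ[D n | ℱ n] :=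
          condExp_sub (hDint _) (hDint _) _
        have h2 : μ[D (n+1) | ℱ n] ≤ᵐ[μ] D n := hsuper.2.1 n (n+1) (Nat.le_succ n)
        have h3 : μ[D n | ℱ n] = D n :=
          condExp_of_stronglyMeasurable (ℱ.le n) (hsuper.stronglyAdapted n) (hDint n)
        filter_upwards [h1, h2] with ω hω1 hω2
        rw [Pi.zero_apply]
        rw [hω1, Pi.sub_apply, h3]; linarith
      rw [heq, ← integral_condExp (ℱ.le n), integral_congr_ae hpull]
      refine integral_nonpos_of_ae ?_
      filter_upwards [hcondnp] with ω hω
      rw [Pi.mul_apply, Pi.zero_apply]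
      exact mul_nonpos_of_nonneg_of_nonpos (hgnn ω) hω
    -- put together
    have hsplit : ∫ ω, (B - X (n + 1) ω) ^ 2 ∂μ - ∫ ω, (B - X n ω) ^ 2 ∂μ
        = ∫ ω in A n, ΔD ω ^ 2 ∂μ - 2 * ∫ ω in A n, (B - D n ω) * ΔD ω ∂μ := by
      rw [← integral_sub (hGint _) (hGint _)]
      have : ∫ ω, ((B - X (n + 1) ω) ^ 2 - (B - X n ω) ^ 2) ∂μ
          = ∫ ω in A n, (ΔD ω ^ 2 - 2 * ((B - D n ω) * ΔD ω)) ∂μ := by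
        rw [← integral_indicator (hAmeas0 n)]
        congr 1; ext ω; exact hid ω
      rw [this, integral_sub hΔDsqint.integrableOn ?hint, integral_const_mul]
      case hint =>
        refine Integrable.integrableOn (Integrable.const_mul ?_ 2)
        refine hbddint _ (B * B) ?_ fun ω => ?_
        · exact ((stronglyMeasurable_const.sub (hDmeas n).stronglyMeasurable).mul
            ((hDmeas (n+1)).sub (hDmeas n)).stronglyMeasurable).aestronglyMeasurable
        · rw [abs_mul]
          refine mul_le_mul ?_ (hΔDbdd ω) (abs_nonneg _) hB.le
          rw [abs_le]; have := hD0 n ω; have := hDB n ω; constructor <;> linarith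
    linarith
  -- step for expected time
  have hH : ∀ n, ∫ ω, ((min (n + 1) (T ω) : ℕ) : ℝ) ∂μ
      = ∫ ω, ((min n (T ω) : ℕ) : ℝ) ∂μ + (μ (A n)).toReal := by
    intro n
    have hint : ∀ m : ℕ, Integrable (fun ω => ((min m (T ω) : ℕ) : ℝ)) μ := by
      intro m
      refine hbddint _ m ?_ fun ω => ?_
      · exact (measurable_from_top.comp (measurable_const.min hTmeasble)).aestronglyMeasurable
      · rw [abs_of_nonneg (by positivity)]
        exact_mod_cast Nat.cast_le.mpr (min_le_left _ _)
    have hidt : ∀ ω, ((min (n + 1) (T ω) : ℕ) : ℝ) - ((min n (T ω) : ℕ) : ℝ)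
        = Set.indicator (A n) (fun _ => (1 : ℝ)) ω := by
      intro ω
      by_cases h : ω ∈ A n
      · have h' : n < T ω := h
        rw [Set.indicator_of_mem h, min_eq_left (by omega : n + 1 ≤ T ω),
          min_eq_left (le_of_lt h')]
        push_cast; ring
      · have hle : T ω ≤ n := by simpa [hA, not_lt] using h
        rw [Set.indicator_of_notMem h, min_eq_right (by omega : T ω ≤ n + 1),
          min_eq_right hle, sub_self]
    have : ∫ ω, (((min (n + 1) (T ω) : ℕ) : ℝ) - ((min n (T ω) : ℕ) : ℝ)) ∂μ
        = (μ (A n)).toReal := by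
      have h2 : ∫ ω, Set.indicator (A n) (fun _ => (1 : ℝ)) ω ∂μ = (μ (A n)).toReal := by
        rw [integral_indicator (hAmeas0 n), setIntegral_const, smul_eq_mul, mul_one]; rfl
      rw [← h2]; congr 1; ext ω; exact hidt ω
    rw [← this, integral_sub (hint (n+1)) (hint n)]; ring
  -- main induction
  have hmain : ∀ n, V * ∫ ω, ((min n (T ω) : ℕ) : ℝ) ∂μ + ∫ ω, (B - D 0 ω) ^ 2 ∂μ
      ≤ ∫ ω, (B - X n ω) ^ 2 ∂μ := by
    intro n
    induction n with
    | zero =>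
      have h1 : ∀ ω, ((min 0 (T ω) : ℕ) : ℝ) = 0 := fun ω => by simp
      have h2 : ∀ ω, X 0 ω = D 0 ω := fun ω => by simp [hX]
      simp only [h1, h2, integral_zero, mul_zero, zero_add, le_refl]
    | succ n ih =>
      have h1 := hG n
      have h2 := hH n
      have hμA : 0 ≤ (μ (A n)).toReal := ENNReal.toReal_nonneg
      nlinarith [mul_nonneg hV.le hμA]
  have hG0nn : 0 ≤ ∫ ω, (B - D 0 ω) ^ 2 ∂μ := integral_nonneg fun ω => sq_nonneg _
  have hGbdd : ∀ n, ∫ ω, (B - X n ω) ^ 2 ∂μ ≤ B ^ 2 := by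
    intro n
    calc ∫ ω, (B - X n ω) ^ 2 ∂μ ≤ ∫ _ω, B ^ 2 ∂μ := by
          refine integral_mono (hGint n) (integrable_const _) fun ω => ?_
          rcases hXbdd n ω with ⟨ha, hb⟩; nlinarith
      _ = B ^ 2 := by simp [measure_univ]
  have hHbdd : ∀ n, ∫ ω, ((min n (T ω) : ℕ) : ℝ) ∂μ ≤ B ^ 2 / V := by
    intro n
    have := hmain n
    have h2 := hGbdd n
    rw [le_div_iff₀ hV]; nlinarith
  -- integrability of T
  have hHint : ∀ m : ℕ, Integrable (fun ω => ((min m (T ω) : ℕ) : ℝ)) μ := by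
    intro m
    refine hbddint _ m ?_ fun ω => ?_
    · exact (measurable_from_top.comp (measurable_const.min hTmeasble)).aestronglyMeasurable
    · rw [abs_of_nonneg (by positivity)]
      exact_mod_cast Nat.cast_le.mpr (min_le_left _ _)
  have hTint : Integrable (fun ω => (T ω : ℝ)) μ := by
    have hlin : ∫⁻ ω, ((T ω : ℕ) : ℝ≥0∞) ∂μ = ⨆ n, ∫⁻ ω, ((min n (T ω) : ℕ) : ℝ≥0∞) ∂μ := by
      rw [← lintegral_iSup]
      · congr 1; ext ω
        refine le_antisymm (le_iSup_iff.mpr fun b hb => ?_) (iSup_le fun n => ?_)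
        · refine le_trans ?_ (hb (T ω))
          simp
        · exact_mod_cast Nat.cast_le.mpr (min_le_right _ _)
      · exact fun n => measurable_from_top.comp
          ((measurable_const.min hTmeasble).comp measurable_id)
      · intro a b hab ω
        exact_mod_cast Nat.cast_le.mpr (min_le_min hab le_rfl)
    have hfin : ∫⁻ ω, ((T ω : ℕ) : ℝ≥0∞) ∂μ ≤ ENNReal.ofReal (B ^ 2 / V) := by
      rw [hlin]
      refine iSup_le fun n => ?_
      have h1 : ∫⁻ ω, ((min n (T ω) : ℕ) : ℝ≥0∞) ∂μ
          = ENNReal.ofReal (∫ ω, ((min n (T ω) : ℕ) : ℝ) ∂μ) := by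
        rw [ofReal_integral_eq_lintegral_ofReal (hHint n) (ae_of_all _ fun ω => by positivity)]
        congr 1; ext ω; rw [ENNReal.ofReal_natCast]
      rw [h1]
      exact ENNReal.ofReal_le_ofReal (hHbdd n)
    constructor
    · exact (measurable_from_top.comp hTmeasble).aestronglyMeasurable
    · rw [hasFiniteIntegral_iff_ofReal (ae_of_all _ fun ω => by positivity)]
      have : ∀ ω, ENNReal.ofReal ((T ω : ℕ) : ℝ) = ((T ω : ℕ) : ℝ≥0∞) :=
        fun ω => ENNReal.ofReal_natCast _
      simp_rw [this]
      exact lt_of_le_of_lt hfin ENNReal.ofReal_lt_top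
  -- measurability of the event S and of the stopped value
  have hDTmeas : Measurable (fun ω => D (T ω) ω) := by
    have hprog : IsStronglyProgressive ℱ D := hsuper.stronglyAdapted.isStronglyProgressive_of_discrete
    have h := (measurable_stoppedValue hprog hstop).mono hstop.measurableSpace_le le_rfl
    exact h
  have hSmeas : MeasurableSet {ω | D (T ω) ω = 0} :=
    hDTmeas (measurableSet_singleton 0)
  have hDTint : Integrable (fun ω => D (T ω) ω) μ := by
    refine hbddint _ B hDTmeas.aestronglyMeasurable fun ω => ?_
    rw [abs_le]; have := hD0 (T ω) ω; have := hDB (T ω) ω; constructor <;> linarith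
  -- limits via dominated convergence
  have hptwise : ∀ ω, Tendsto (fun n => X n ω) atTop (nhds (D (T ω) ω)) := by
    intro ω
    refine tendsto_atTop_of_eventually_const (i₀ := T ω) fun n hn => ?_
    simp only [hX, min_eq_right hn]
  have hElim : Tendsto (fun n => ∫ ω, X n ω ∂μ) atTop (nhds (∫ ω, D (T ω) ω ∂μ)) := by
    refine tendsto_integral_of_dominated_convergence (fun _ => B)
      (fun n => (hXmeas n).aestronglyMeasurable) (integrable_const B)
      (fun n => ae_of_all _ fun ω => ?_) (ae_of_all _ hptwise)
    rw [Real.norm_eq_abs, abs_le]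
    rcases hXbdd n ω with ⟨h1, h2⟩; constructor <;> linarith
  have hGlim : Tendsto (fun n => ∫ ω, (B - X n ω) ^ 2 ∂μ) atTop
      (nhds (∫ ω, (B - D (T ω) ω) ^ 2 ∂μ)) := by
    refine tendsto_integral_of_dominated_convergence (fun _ => B ^ 2)
      (fun n => ((stronglyMeasurable_const.sub (hXmeas n)).pow _).aestronglyMeasurable)
      (integrable_const _) (fun n => ae_of_all _ fun ω => ?_)
      (ae_of_all _ fun ω => ?_)
    · show ‖(B - X n ω) ^ 2‖ ≤ B ^ 2
      rw [Real.norm_eq_abs, abs_le]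
      rcases hXbdd n ω with ⟨h1, h2⟩
      constructor <;> nlinarith [sq_nonneg (B - X n ω), sq_nonneg B,
        mul_nonneg h1 (by linarith : (0:ℝ) ≤ 2 * B - X n ω)]
    · exact ((tendsto_const_nhds.sub (hptwise ω)).pow 2)
  have hHlim : Tendsto (fun n => ∫ ω, ((min n (T ω) : ℕ) : ℝ) ∂μ) atTop
      (nhds (∫ ω, (T ω : ℝ) ∂μ)) := by
    refine tendsto_integral_of_dominated_convergence (fun ω => (T ω : ℝ))
      (fun n => (hHint n).aestronglyMeasurable) hTint
      (fun n => ae_of_all _ fun ω => ?_) (ae_of_all _ fun ω => ?_)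
    · rw [Real.norm_eq_abs, abs_of_nonneg (by positivity)]
      exact_mod_cast Nat.cast_le.mpr (min_le_right _ _)
    · refine tendsto_atTop_of_eventually_const (i₀ := T ω) fun n hn => ?_
      rw [min_eq_right hn]
  -- compute the limit integrals
  set S : Set Ω := {ω | D (T ω) ω = 0} with hSdef
  have hμS1 : μ S ≤ 1 := prob_le_one
  have hpnn : 0 ≤ p := hp ▸ ENNReal.toReal_nonneg
  have hcompl : (μ Sᶜ).toReal = 1 - p := by
    rw [prob_compl_eq_one_sub hSmeas, hp]
    rw [ENNReal.toReal_sub_of_le hμS1 ENNReal.one_ne_top, ENNReal.toReal_one]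
  have hDT_eq : ∫ ω, D (T ω) ω ∂μ = B * (1 - p) := by
    rw [← integral_add_compl hSmeas hDTint]
    have h1 : ∫ ω in S, D (T ω) ω ∂μ = 0 := by
      rw [setIntegral_congr_fun hSmeas (g := fun _ => (0:ℝ)) fun ω hω => hω]
      simp
    have h2 : ∫ ω in Sᶜ, D (T ω) ω ∂μ = B * (1 - p) := by
      rw [setIntegral_congr_fun hSmeas.compl (g := fun _ => B) fun ω hω => ?_]
      · rw [setIntegral_const, smul_eq_mul, measureReal_def, hcompl]; ring
      · rcases hTspec ω with h | h
        · exact absurd h hω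
        · exact h
    rw [h1, h2, zero_add]
  have hGT_eq : ∫ ω, (B - D (T ω) ω) ^ 2 ∂μ = B ^ 2 * p := by
    rw [← integral_add_compl hSmeas (by
      refine hbddint _ (B ^ 2) ((stronglyMeasurable_const.sub
        hDTmeas.stronglyMeasurable).pow _).aestronglyMeasurable fun ω => ?_
      rw [abs_le]; have := hD0 (T ω) ω; have := hDB (T ω) ω; constructor <;> nlinarith)]
    have h1 : ∫ ω in S, (B - D (T ω) ω) ^ 2 ∂μ = B ^ 2 * p := by
      rw [setIntegral_congr_fun hSmeas (g := fun _ => B ^ 2) fun ω hω => by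
        rw [Set.mem_setOf_eq] at hω; rw [hω]; ring]
      rw [setIntegral_const, smul_eq_mul, measureReal_def, hp]; ring
    have h2 : ∫ ω in Sᶜ, (B - D (T ω) ω) ^ 2 ∂μ = 0 := by
      rw [setIntegral_congr_fun hSmeas.compl (g := fun _ => (0:ℝ)) fun ω hω => ?_]
      · simp
      · rcases hTspec ω with h | h
        · exact absurd h hω
        · rw [h]; ring
    rw [h1, h2, add_zero]
  -- part 1
  have hEanti : ∀ n, ∫ ω, X n ω ∂μ ≤ ∫ ω, D 0 ω ∂μ := by
    intro n
    induction n with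
    | zero => simp only [hX]; simp
    | succ n ih => exact le_trans (hE n) ih
  have hD0led : ∫ ω, D 0 ω ∂μ ≤ d := by
    calc ∫ ω, D 0 ω ∂μ ≤ ∫ _ω, d ∂μ := integral_mono (hDint 0) (integrable_const d)
          fun ω => h0 ω
      _ = d := by simp [measure_univ]
  have hpart1 : ∫ ω, D (T ω) ω ∂μ ≤ d :=
    le_of_tendsto hElim (Eventually.of_forall fun n => le_trans (hEanti n) hD0led)
  rw [hDT_eq] at hpart1
  have hone : 1 - d / B ≤ p := by
    have h2 : 1 - p ≤ d / B := (le_div_iff₀ hB).mpr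
      (by linarith [mul_comm B (1 - p), hpart1])
    linarith
  -- part 2
  have hVT : V * ∫ ω, (T ω : ℝ) ∂μ ≤ B ^ 2 * p := by
    have h1 : Tendsto (fun n => V * ∫ ω, ((min n (T ω) : ℕ) : ℝ) ∂μ) atTop
        (nhds (V * ∫ ω, (T ω : ℝ) ∂μ)) := hHlim.const_mul V
    rw [hGT_eq] at hGlim
    refine le_of_tendsto_of_tendsto' h1 hGlim fun n => ?_
    have := hmain n
    linarith
  have hTS : ∫ ω in S, (T ω : ℝ) ∂μ ≤ ∫ ω, (T ω : ℝ) ∂μ :=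
    setIntegral_le_integral hTint (ae_of_all _ fun ω => by positivity)
  have hfinal : ∫ ω in S, (T ω : ℝ) ∂μ ≤ (B ^ 2 / V) * p := by
    have h2 : ∫ ω, (T ω : ℝ) ∂μ ≤ B ^ 2 * p / V := by
      rw [le_div_iff₀ hV]; linarith
    calc ∫ ω in S, (T ω : ℝ) ∂μ ≤ ∫ ω, (T ω : ℝ) ∂μ := hTS
      _ ≤ B ^ 2 * p / V := h2
      _ = (B ^ 2 / V) * p := by ring
  exact ⟨hone, hfinal⟩
end
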